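/- arXiv:2411.02929 — 4 statements merged into one kernel-verified Lean document; each statement's English description precedes it below -/
import Mathlib

section
/- Let (Ω, 𝒜, μ) be a probability space, let W : ℝ → Ω → ℝ be a family of measurable random variables indexed by t > 0, and let b : ℝ → (0,∞) satisfy b(t) → ∞ as t → ∞. Assume that for every ξ ∈ ℝ and every t > 0 the function e^{ξ W_t} is integrable with respect to μ, that the limit F(ξ) := lim_{t→∞} (1/b(t)) · log ∫_Ω e^{ξ W_t(ω)} dμ(ω) exists for every ξ ∈ ℝ, and that F is differentiable and strictly convex on ℝ. Let I(η) := sup_{ξ ∈ ℝ} (ξη − F(ξ)) be the Legendre–Fenchel transform of F. Then: (i) for every closed set C ⊆ ℝ, limsup_{t→∞} (1/b(t)) · log μ{ω : W_t(ω)/b(t) ∈ C} ≤ −inf_{η ∈ C} I(η); and (ii) for every open set G ⊆ ℝ, liminf_{t→∞} (1/b(t)) · log μ{ω : W_t(ω)/b(t) ∈ G} ≥ −inf_{η ∈ G} I(η). -/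
open MeasureTheory Filter Topology

open scoped ENNReal NNReal

set_option maxHeartbeats 2000000

noncomputable section

namespace GartnerEllisAux

lemma aux_limsup_le {f : ℝ → EReal} {g : ℝ → ℝ} {c : ℝ}
    (hle : ∀ᶠ t in atTop, f t ≤ (g t : EReal)) (hg : Tendsto g atTop (nhds c)) :
    Filter.limsup f atTop ≤ (c : EReal) := by
  have h2 : Tendsto (fun t => ((g t : ℝ) : EReal)) atTop (nhds (c : EReal)) := EReal.tendsto_coe.2 hg
  calc Filter.limsup f atTop ≤ Filter.limsup (fun t => ((g t : ℝ) : EReal)) atTop :=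
        Filter.limsup_le_limsup hle
    _ = (c : EReal) := h2.limsup_eq

lemma aux_le_liminf {f : ℝ → EReal} {g : ℝ → ℝ} {c : ℝ}
    (hle : ∀ᶠ t in atTop, (g t : EReal) ≤ f t) (hg : Tendsto g atTop (nhds c)) :
    (c : EReal) ≤ Filter.liminf f atTop := by
  have h2 : Tendsto (fun t => ((g t : ℝ) : EReal)) atTop (nhds (c : EReal)) := EReal.tendsto_coe.2 hg
  calc (c:EReal) = Filter.liminf (fun t => ((g t : ℝ) : EReal)) atTop := h2.liminf_eq.symm
    _ ≤ Filter.liminf f atTop := Filter.liminf_le_liminf hle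


lemma chernoff_upper {Ω : Type*} [MeasurableSpace Ω] (μ : Measure Ω) [IsProbabilityMeasure μ]
    (X : Ω → ℝ) (B c ξ : ℝ) (hB : 0 < B) (hξ : 0 ≤ ξ)
    (h_int : Integrable (fun ω => Real.exp (ξ * X ω)) μ) :
    ((1/B : ℝ) : EReal) * (μ {ω | c ≤ X ω / B}).log ≤
      ((-(ξ*c) + (1/B) * Real.log (∫ ω, Real.exp (ξ * X ω) ∂μ) : ℝ) : EReal) := by
  have hset : {ω | c ≤ X ω / B} = {ω | c * B ≤ X ω} := by
    ext ω; simp [Set.mem_setOf_eq, le_div_iff₀ hB]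
  rw [hset]
  set s := {ω | c * B ≤ X ω} with hs
  by_cases hzero : μ s = 0
  · rw [hzero]
    simp only [ENNReal.log_zero]
    rw [EReal.coe_mul_bot_of_pos (by positivity)]
    exact bot_le
  · have hne : μ s ≠ ⊤ := measure_ne_top μ s
    have htR : 0 < (μ s).toReal := ENNReal.toReal_pos hzero hne
    rw [ENNReal.log_pos_real' htR]
    rw [← EReal.coe_mul, EReal.coe_le_coe_iff]
    have h1 : (μ s).toReal ≤ Real.exp (-ξ * (c*B)) * ProbabilityTheory.mgf X μ ξ :=
      ProbabilityTheory.measure_ge_le_exp_mul_mgf (c*B) hξ h_int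
    have hmgf : 0 < ProbabilityTheory.mgf X μ ξ := ProbabilityTheory.mgf_pos h_int
    have h2 : Real.log (μ s).toReal ≤ -ξ * (c*B) + Real.log (∫ ω, Real.exp (ξ * X ω) ∂μ) := by
      calc Real.log (μ s).toReal ≤ Real.log (Real.exp (-ξ * (c*B)) * ProbabilityTheory.mgf X μ ξ) :=
            Real.log_le_log htR h1
        _ = -ξ * (c*B) + Real.log (ProbabilityTheory.mgf X μ ξ) := by
            rw [Real.log_mul (Real.exp_ne_zero _) hmgf.ne', Real.log_exp]
        _ = -ξ * (c*B) + Real.log (∫ ω, Real.exp (ξ * X ω) ∂μ) := rfl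
    have h3 : (1/B) * Real.log (μ s).toReal ≤ (1/B) * (-ξ * (c*B) + Real.log (∫ ω, Real.exp (ξ * X ω) ∂μ)) :=
      mul_le_mul_of_nonneg_left h2 (by positivity)
    calc (1/B) * Real.log (μ s).toReal ≤ _ := h3
      _ = -(ξ*c) + (1/B) * Real.log (∫ ω, Real.exp (ξ * X ω) ∂μ) := by
          field_simp

lemma chernoff_lower {Ω : Type*} [MeasurableSpace Ω] (μ : Measure Ω) [IsProbabilityMeasure μ]
    (X : Ω → ℝ) (B c ζ : ℝ) (hB : 0 < B) (hζ : ζ ≤ 0)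
    (h_int : Integrable (fun ω => Real.exp (ζ * X ω)) μ) :
    ((1/B : ℝ) : EReal) * (μ {ω | X ω / B ≤ c}).log ≤
      ((-(ζ*c) + (1/B) * Real.log (∫ ω, Real.exp (ζ * X ω) ∂μ) : ℝ) : EReal) := by
  have key := chernoff_upper μ (fun ω => -X ω) B (-c) (-ζ) hB (neg_nonneg.2 hζ)
    (by simpa [neg_mul_neg] using h_int)
  have hset : {ω | -c ≤ (-X ω) / B} = {ω | X ω / B ≤ c} := by
    ext ω; rw [Set.mem_setOf_eq, Set.mem_setOf_eq, neg_div, neg_le_neg_iff]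
  simp only [neg_mul_neg, hset] at key
  exact key

lemma aux_mul_add_le (c r : ℝ) (hc : 0 ≤ c) (x : EReal) :
    (c : EReal) * ((r : EReal) + x) ≤ ((c * r : ℝ) : EReal) + (c : EReal) * x := by
  induction x using EReal.rec with
  | bot =>
    rcases hc.eq_or_lt with rfl | hcpos
    · simp
    · rw [EReal.add_bot, EReal.coe_mul_bot_of_pos hcpos]
      exact bot_le
  | coe y =>
    rw [← EReal.coe_add, ← EReal.coe_mul, ← EReal.coe_mul, ← EReal.coe_add, EReal.coe_le_coe_iff]
    rw [mul_add]
  | top =>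
    rcases hc.eq_or_lt with rfl | hcpos
    · simp
    · rw [EReal.add_top_of_ne_bot (EReal.coe_ne_bot r), EReal.coe_mul_top_of_pos hcpos,
        EReal.add_top_of_ne_bot (EReal.coe_ne_bot _)]

lemma aux_mul_max (c : ℝ) (hc : 0 ≤ c) (x y : EReal) :
    (c : EReal) * max x y = max ((c:EReal) * x) ((c:EReal) * y) := by
  have hmono : Monotone (fun z : EReal => (c:EReal) * z) := by
    intro a b hab
    exact mul_le_mul_of_nonneg_left hab (EReal.coe_nonneg.2 hc)
  exact hmono.map_max

lemma aux_log_two : ENNReal.log (2 : ℝ≥0∞) = ((Real.log 2 : ℝ) : EReal) := by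
  have h2 : (2 : ℝ≥0∞) = ENNReal.ofReal 2 := by norm_num
  rw [h2, ENNReal.log_ofReal_of_pos (by norm_num)]

lemma tail_right {Ω : Type*} [MeasurableSpace Ω] (μ : Measure Ω) [IsProbabilityMeasure μ]
    (W : ℝ → Ω → ℝ) (b : ℝ → ℝ) (hb : Tendsto b atTop atTop)
    (hint : ∀ ξ : ℝ, ∀ t : ℝ, 0 < t → Integrable (fun ω => Real.exp (ξ * W t ω)) μ)
    (F : ℝ → ℝ)
    (hF : ∀ ξ : ℝ, Tendsto (fun t => (1 / b t) * Real.log (∫ ω, Real.exp (ξ * W t ω) ∂μ))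
      atTop (nhds (F ξ)))
    (η₀ : ℝ) (htan : ∀ ξ, ξ * η₀ ≤ F ξ) (hF0 : F 0 = 0)
    (I : ℝ → EReal) (hI : ∀ η : ℝ, I η = ⨆ ξ : ℝ, ((ξ * η - F ξ : ℝ) : EReal))
    (c : ℝ) (hc : η₀ ≤ c) :
    Filter.limsup (fun t => ((1/b t : ℝ) : EReal) * (μ {ω | c ≤ W t ω / b t}).log) atTop
      ≤ -(I c) := by
  set L := fun t => ((1/b t : ℝ) : EReal) * (μ {ω | c ≤ W t ω / b t}).log with hL
  have hbpos : ∀ᶠ t in atTop, 0 < b t ∧ 0 < t :=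
    (hb.eventually_gt_atTop 0).and (eventually_gt_atTop 0)
  have step : ∀ ξ : ℝ, 0 ≤ ξ → Filter.limsup L atTop ≤ ((F ξ - ξ*c : ℝ) : EReal) := by
    intro ξ hξ
    have hlim : Tendsto (fun t => -(ξ*c) + (1/b t) * Real.log (∫ ω, Real.exp (ξ * W t ω) ∂μ))
        atTop (nhds (F ξ - ξ*c)) := by
      have := (tendsto_const_nhds (x := -(ξ*c)) (f := atTop (α := ℝ))).add (hF ξ)
      convert this using 2
      ring
    refine aux_limsup_le ?_ hlim
    filter_upwards [hbpos] with t ht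
    exact chernoff_upper μ (W t) (b t) c ξ ht.1 hξ (hint ξ t ht.2)
  have hls0 : Filter.limsup L atTop ≤ (0 : EReal) := by
    have := step 0 le_rfl
    simpa [hF0] using this
  rw [hI]
  refine EReal.le_neg_of_le_neg ?_
  refine iSup_le fun ξ => ?_
  rcases le_or_gt 0 ξ with hξ | hξ
  · have h1 := step ξ hξ
    have : L ≤ᶠ[atTop] _ := Filter.Eventually.of_forall (fun t => le_rfl)
    refine EReal.le_neg_of_le_neg ?_
    calc Filter.limsup L atTop ≤ ((F ξ - ξ*c : ℝ) : EReal) := h1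
      _ = -((ξ * c - F ξ : ℝ) : EReal) := by
          rw [← EReal.coe_neg]; norm_num
  · have h2 : (((ξ * c - F ξ : ℝ)) : EReal) ≤ ((0:ℝ) : EReal) := by
      apply EReal.coe_le_coe_iff.2
      have : ξ * c ≤ ξ * η₀ := mul_le_mul_of_nonpos_left hc hξ.le
      linarith [htan ξ]
    calc (((ξ * c - F ξ : ℝ)) : EReal) ≤ ((0:ℝ):EReal) := h2
      _ = -(0:EReal) := by norm_num
      _ ≤ -Filter.limsup L atTop := EReal.neg_le_neg_iff.2 hls0

lemma tail_left {Ω : Type*} [MeasurableSpace Ω] (μ : Measure Ω) [IsProbabilityMeasure μ]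
    (W : ℝ → Ω → ℝ) (b : ℝ → ℝ) (hb : Tendsto b atTop atTop)
    (hint : ∀ ξ : ℝ, ∀ t : ℝ, 0 < t → Integrable (fun ω => Real.exp (ξ * W t ω)) μ)
    (F : ℝ → ℝ)
    (hF : ∀ ξ : ℝ, Tendsto (fun t => (1 / b t) * Real.log (∫ ω, Real.exp (ξ * W t ω) ∂μ))
      atTop (nhds (F ξ)))
    (η₀ : ℝ) (htan : ∀ ξ, ξ * η₀ ≤ F ξ) (hF0 : F 0 = 0)
    (I : ℝ → EReal) (hI : ∀ η : ℝ, I η = ⨆ ξ : ℝ, ((ξ * η - F ξ : ℝ) : EReal))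
    (c : ℝ) (hc : c ≤ η₀) :
    Filter.limsup (fun t => ((1/b t : ℝ) : EReal) * (μ {ω | W t ω / b t ≤ c}).log) atTop
      ≤ -(I c) := by
  set L := fun t => ((1/b t : ℝ) : EReal) * (μ {ω | W t ω / b t ≤ c}).log with hL
  have hbpos : ∀ᶠ t in atTop, 0 < b t ∧ 0 < t :=
    (hb.eventually_gt_atTop 0).and (eventually_gt_atTop 0)
  have step : ∀ ξ : ℝ, ξ ≤ 0 → Filter.limsup L atTop ≤ ((F ξ - ξ*c : ℝ) : EReal) := by
    intro ξ hξ
    have hlim : Tendsto (fun t => -(ξ*c) + (1/b t) * Real.log (∫ ω, Real.exp (ξ * W t ω) ∂μ))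
        atTop (nhds (F ξ - ξ*c)) := by
      have := (tendsto_const_nhds (x := -(ξ*c)) (f := atTop (α := ℝ))).add (hF ξ)
      convert this using 2
      ring
    refine aux_limsup_le ?_ hlim
    filter_upwards [hbpos] with t ht
    exact chernoff_lower μ (W t) (b t) c ξ ht.1 hξ (hint ξ t ht.2)
  have hls0 : Filter.limsup L atTop ≤ (0 : EReal) := by
    have := step 0 le_rfl
    simpa [hF0] using this
  rw [hI]
  refine EReal.le_neg_of_le_neg ?_
  refine iSup_le fun ξ => ?_
  rcases le_or_gt ξ 0 with hξ | hξ
  · have h1 := step ξ hξ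
    refine EReal.le_neg_of_le_neg ?_
    calc Filter.limsup L atTop ≤ ((F ξ - ξ*c : ℝ) : EReal) := h1
      _ = -((ξ * c - F ξ : ℝ) : EReal) := by
          rw [← EReal.coe_neg]; norm_num
  · have h2 : (((ξ * c - F ξ : ℝ)) : EReal) ≤ ((0:ℝ) : EReal) := by
      apply EReal.coe_le_coe_iff.2
      have : ξ * c ≤ ξ * η₀ := mul_le_mul_of_nonneg_left hc hξ.le
      linarith [htan ξ]
    calc (((ξ * c - F ξ : ℝ)) : EReal) ≤ ((0:ℝ):EReal) := h2
      _ = -(0:EReal) := by norm_num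
      _ ≤ -Filter.limsup L atTop := EReal.neg_le_neg_iff.2 hls0

lemma upper_bound {Ω : Type*} [MeasurableSpace Ω] (μ : Measure Ω) [IsProbabilityMeasure μ]
    (W : ℝ → Ω → ℝ) (b : ℝ → ℝ) (hb : Tendsto b atTop atTop)
    (F : ℝ → ℝ) (I : ℝ → EReal)
    (hint : ∀ ξ : ℝ, ∀ t : ℝ, 0 < t → Integrable (fun ω => Real.exp (ξ * W t ω)) μ)
    (hF : ∀ ξ : ℝ, Tendsto (fun t => (1 / b t) * Real.log (∫ ω, Real.exp (ξ * W t ω) ∂μ))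
      atTop (nhds (F ξ)))
    (η₀ : ℝ) (htan : ∀ ξ, ξ * η₀ ≤ F ξ) (hF0 : F 0 = 0)
    (hI : ∀ η : ℝ, I η = ⨆ ξ : ℝ, ((ξ * η - F ξ : ℝ) : EReal))
    (C : Set ℝ) (hC : IsClosed C) :
    Filter.limsup (fun t : ℝ => ((1 / b t : ℝ) : EReal) *
        (μ {ω | W t ω / b t ∈ C}).log) atTop ≤ - ⨅ η ∈ C, I η := by
  classical
  set Ll : ℝ → EReal := fun t => ((1/b t : ℝ) : EReal) *
    (μ {ω | W t ω / b t ∈ C ∩ Set.Iic η₀}).log with hLl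
  set Lr : ℝ → EReal := fun t => ((1/b t : ℝ) : EReal) *
    (μ {ω | W t ω / b t ∈ C ∩ Set.Ici η₀}).log with hLr
  have hbpos : ∀ᶠ t in atTop, 0 < b t := hb.eventually_gt_atTop 0
  -- Step 1: eventual pointwise bound
  have hsplit : ∀ᶠ t in atTop, ((1 / b t : ℝ) : EReal) * (μ {ω | W t ω / b t ∈ C}).log ≤
      ((1/b t * Real.log 2 : ℝ) : EReal) + max (Ll t) (Lr t) := by
    filter_upwards [hbpos] with t hbt
    have hnn : (0:ℝ) ≤ 1 / b t := by positivity
    have hμ : μ {ω | W t ω / b t ∈ C} ≤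
        2 * max (μ {ω | W t ω / b t ∈ C ∩ Set.Iic η₀}) (μ {ω | W t ω / b t ∈ C ∩ Set.Ici η₀}) := by
      have hsub : {ω | W t ω / b t ∈ C} ⊆
          {ω | W t ω / b t ∈ C ∩ Set.Iic η₀} ∪ {ω | W t ω / b t ∈ C ∩ Set.Ici η₀} := by
        intro ω hω
        rcases le_total (W t ω / b t) η₀ with h | h
        · exact Or.inl ⟨hω, h⟩
        · exact Or.inr ⟨hω, h⟩
      calc μ {ω | W t ω / b t ∈ C} ≤
          μ ({ω | W t ω / b t ∈ C ∩ Set.Iic η₀} ∪ {ω | W t ω / b t ∈ C ∩ Set.Ici η₀}) :=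
            measure_mono hsub
        _ ≤ μ {ω | W t ω / b t ∈ C ∩ Set.Iic η₀} + μ {ω | W t ω / b t ∈ C ∩ Set.Ici η₀} :=
            measure_union_le _ _
        _ ≤ 2 * max _ _ := by
            rw [two_mul]
            exact add_le_add (le_max_left _ _) (le_max_right _ _)
    have hlog : (μ {ω | W t ω / b t ∈ C}).log ≤
        ((Real.log 2 : ℝ) : EReal) + max ((μ {ω | W t ω / b t ∈ C ∩ Set.Iic η₀}).log)
          ((μ {ω | W t ω / b t ∈ C ∩ Set.Ici η₀}).log) := by
      calc (μ {ω | W t ω / b t ∈ C}).log ≤ ENNReal.log (2 * max _ _) := ENNReal.log_monotone hμ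
        _ = ENNReal.log 2 + ENNReal.log (max _ _) := ENNReal.log_mul_add
        _ = ((Real.log 2 : ℝ) : EReal) + max _ _ := by
            rw [aux_log_two, ENNReal.log_monotone.map_max]
    calc ((1 / b t : ℝ) : EReal) * (μ {ω | W t ω / b t ∈ C}).log ≤
        ((1 / b t : ℝ) : EReal) * (((Real.log 2 : ℝ) : EReal) + max _ _) :=
          mul_le_mul_of_nonneg_left hlog (EReal.coe_nonneg.2 hnn)
      _ ≤ ((1/b t * Real.log 2 : ℝ) : EReal) + ((1 / b t : ℝ) : EReal) * max _ _ :=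
          aux_mul_add_le _ _ hnn _
      _ = ((1/b t * Real.log 2 : ℝ) : EReal) + max (Ll t) (Lr t) := by
          rw [aux_mul_max _ hnn]
  -- Step 2: limsup of the sum
  have hloglim : Filter.limsup (fun t => ((1/b t * Real.log 2 : ℝ) : EReal)) atTop = (0 : EReal) := by
    have h0 : Tendsto (fun t => 1/b t * Real.log 2) atTop (nhds 0) := by
      have hinv : Tendsto (fun t => 1/b t) atTop (nhds 0) := by
        simp only [one_div]; exact hb.inv_tendsto_atTop
      simpa using hinv.mul_const (Real.log 2)
    have := (EReal.tendsto_coe.2 h0).limsup_eq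
    simpa using this
  have hmain : Filter.limsup (fun t : ℝ => ((1 / b t : ℝ) : EReal) *
      (μ {ω | W t ω / b t ∈ C}).log) atTop ≤
      max (Filter.limsup Ll atTop) (Filter.limsup Lr atTop) := by
    calc Filter.limsup (fun t : ℝ => ((1 / b t : ℝ) : EReal) * (μ {ω | W t ω / b t ∈ C}).log) atTop
        ≤ Filter.limsup (fun t => ((1/b t * Real.log 2 : ℝ) : EReal) + max (Ll t) (Lr t)) atTop :=
          Filter.limsup_le_limsup hsplit
      _ ≤ Filter.limsup (fun t => ((1/b t * Real.log 2 : ℝ) : EReal)) atTop +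
          Filter.limsup (fun t => max (Ll t) (Lr t)) atTop := by
          apply EReal.limsup_add_le
          · left; rw [hloglim]; exact EReal.zero_ne_bot
          · left; rw [hloglim]; exact EReal.zero_ne_top
      _ = Filter.limsup (fun t => max (Ll t) (Lr t)) atTop := by rw [hloglim, zero_add]
      _ = max (Filter.limsup Ll atTop) (Filter.limsup Lr atTop) := limsup_max
  refine hmain.trans (max_le ?_ ?_)
  · -- left tail
    rcases (C ∩ Set.Iic η₀).eq_empty_or_nonempty with hemp | hne
    · have hev : ∀ᶠ t in atTop, Ll t = ⊥ := by
        filter_upwards [hbpos] with t hbt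
        rw [hLl]
        simp only [hemp]
        norm_num
        rw [EReal.coe_mul_bot_of_pos]
        positivity
      have : Filter.limsup Ll atTop ≤ ⊥ := by
        have := Filter.limsup_congr hev
        rw [this, Filter.limsup_const]
      exact this.trans bot_le
    · set cm := sSup (C ∩ Set.Iic η₀) with hc
      have hclosed : IsClosed (C ∩ Set.Iic η₀) := hC.inter isClosed_Iic
      have hbdd : BddAbove (C ∩ Set.Iic η₀) := ⟨η₀, fun x hx => hx.2⟩
      have hmem : cm ∈ C ∩ Set.Iic η₀ := hclosed.csSup_mem hne hbdd
      have hle : cm ≤ η₀ := hmem.2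
      have hsub : ∀ t, {ω | W t ω / b t ∈ C ∩ Set.Iic η₀} ⊆ {ω | W t ω / b t ≤ cm} := by
        intro t ω hω
        exact le_csSup hbdd hω
      have hev1 : ∀ᶠ t in atTop, Ll t ≤
          ((1/b t : ℝ) : EReal) * (μ {ω | W t ω / b t ≤ cm}).log := by
        filter_upwards [hbpos] with t hbt
        exact mul_le_mul_of_nonneg_left (ENNReal.log_monotone (measure_mono (hsub t)))
          (EReal.coe_nonneg.2 (by positivity))
      have h1 := Filter.limsup_le_limsup hev1
      refine h1.trans ((tail_left μ W b hb hint F hF η₀ htan hF0 I hI cm hle).trans ?_)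
      exact EReal.neg_le_neg_iff.2 (iInf₂_le cm hmem.1)
  · rcases (C ∩ Set.Ici η₀).eq_empty_or_nonempty with hemp | hne
    · have hev : ∀ᶠ t in atTop, Lr t = ⊥ := by
        filter_upwards [hbpos] with t hbt
        rw [hLr]
        simp only [hemp]
        norm_num
        rw [EReal.coe_mul_bot_of_pos]
        positivity
      have : Filter.limsup Lr atTop ≤ ⊥ := by
        have := Filter.limsup_congr hev
        rw [this, Filter.limsup_const]
      exact this.trans bot_le
    · set cp := sInf (C ∩ Set.Ici η₀) with hc
      have hclosed : IsClosed (C ∩ Set.Ici η₀) := hC.inter isClosed_Ici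
      have hbdd : BddBelow (C ∩ Set.Ici η₀) := ⟨η₀, fun x hx => hx.2⟩
      have hmem : cp ∈ C ∩ Set.Ici η₀ := hclosed.csInf_mem hne hbdd
      have hle : η₀ ≤ cp := hmem.2
      have hsub : ∀ t, {ω | W t ω / b t ∈ C ∩ Set.Ici η₀} ⊆ {ω | cp ≤ W t ω / b t} := by
        intro t ω hω
        exact csInf_le hbdd hω
      have hev1 : ∀ᶠ t in atTop, Lr t ≤
          ((1/b t : ℝ) : EReal) * (μ {ω | cp ≤ W t ω / b t}).log := by
        filter_upwards [hbpos] with t hbt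
        exact mul_le_mul_of_nonneg_left (ENNReal.log_monotone (measure_mono (hsub t)))
          (EReal.coe_nonneg.2 (by positivity))
      have h1 := Filter.limsup_le_limsup hev1
      refine h1.trans ((tail_right μ W b hb hint F hF η₀ htan hF0 I hI cp hle).trans ?_)
      exact EReal.neg_le_neg_iff.2 (iInf₂_le cp hmem.1)

lemma lb_core {Ω : Type*} [MeasurableSpace Ω] (μ : Measure Ω) [IsProbabilityMeasure μ]
    (W : ℝ → Ω → ℝ) (hW : ∀ t : ℝ, 0 < t → Measurable (W t))
    (b : ℝ → ℝ) (hb : Tendsto b atTop atTop)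
    (hint : ∀ ξ : ℝ, ∀ t : ℝ, 0 < t → Integrable (fun ω => Real.exp (ξ * W t ω)) μ)
    (F : ℝ → ℝ)
    (hF : ∀ ξ : ℝ, Tendsto (fun t => (1 / b t) * Real.log (∫ ω, Real.exp (ξ * W t ω) ∂μ))
      atTop (nhds (F ξ)))
    (G : Set ℝ) (ξ₀ η δ : ℝ) (hδ : 0 < δ) (hd : HasDerivAt F η ξ₀)
    (hball : Metric.ball η δ ⊆ G) :
    ((F ξ₀ - ξ₀*η - |ξ₀| * δ : ℝ) : EReal) ≤
      Filter.liminf (fun t : ℝ => ((1 / b t : ℝ) : EReal) * (μ {ω | W t ω / b t ∈ G}).log) atTop := by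
  set M : ℝ := ξ₀*η + |ξ₀| * δ with hM
  have hslope : Tendsto (slope F ξ₀) (𝓝[≠] ξ₀) (𝓝 η) := hasDerivAt_iff_tendsto_slope.1 hd
  obtain ⟨xp, hxpslope, hxpmem⟩ :
      ∃ x, slope F ξ₀ x < η + δ ∧ x ∈ Set.Ioi ξ₀ := by
    have h1 : Tendsto (slope F ξ₀) (𝓝[>] ξ₀) (𝓝 η) :=
      hslope.mono_left (nhdsWithin_mono _ (fun x hx => ne_of_gt hx))
    exact ((h1.eventually_lt_const (by linarith)).and self_mem_nhdsWithin).exists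
  obtain ⟨xm, hxmslope, hxmmem⟩ :
      ∃ x, η - δ < slope F ξ₀ x ∧ x ∈ Set.Iio ξ₀ := by
    have h1 : Tendsto (slope F ξ₀) (𝓝[<] ξ₀) (𝓝 η) :=
      hslope.mono_left (nhdsWithin_mono _ (fun x hx => ne_of_lt hx))
    exact ((h1.eventually_const_lt (by linarith)).and self_mem_nhdsWithin).exists
  set sp : ℝ := xp - ξ₀ with hsp
  set sm : ℝ := xm - ξ₀ with hsm
  have hsppos : 0 < sp := sub_pos.2 hxpmem
  have hsmneg : sm < 0 := sub_neg.2 hxmmem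
  have hkeyp : F (ξ₀ + sp) - F ξ₀ - sp*(η+δ) < 0 := by
    have h := hxpslope
    rw [slope_def_field] at h
    have hd0 : (0:ℝ) < xp - ξ₀ := sub_pos.2 hxpmem
    rw [div_lt_iff₀ hd0] at h
    have hx : ξ₀ + sp = xp := by rw [hsp]; ring
    rw [hx, hsp]
    nlinarith [h]
  have hkeym : F (ξ₀ + sm) - F ξ₀ - sm*(η-δ) < 0 := by
    have h := hxmslope
    rw [slope_def_field] at h
    have hd0 : xm - ξ₀ < (0:ℝ) := sub_neg.2 hxmmem
    rw [lt_div_iff_of_neg hd0] at h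
    have hx : ξ₀ + sm = xm := by rw [hsm]; ring
    rw [hx, hsm]
    nlinarith [h]
  have hbpos : ∀ᶠ t in atTop, 0 < b t ∧ 0 < t :=
    (hb.eventually_gt_atTop 0).and (eventually_gt_atTop 0)
  have hinv : Tendsto (fun t => 1/b t) atTop (nhds 0) := by
    simp only [one_div]; exact hb.inv_tendsto_atTop
  have hevp : ∀ᶠ t in atTop,
      (1/b t) * Real.log (∫ ω, Real.exp ((ξ₀+sp) * W t ω) ∂μ) - sp*(η+δ) <
      (1/b t) * Real.log (∫ ω, Real.exp (ξ₀ * W t ω) ∂μ) - (1/b t) * Real.log 4 := by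
    apply Filter.Tendsto.eventually_lt ((hF (ξ₀+sp)).sub tendsto_const_nhds)
      ((hF ξ₀).sub (hinv.mul_const (Real.log 4)))
    simp only [zero_mul]
    linarith [hkeyp]
  have hevm : ∀ᶠ t in atTop,
      (1/b t) * Real.log (∫ ω, Real.exp ((ξ₀+sm) * W t ω) ∂μ) - sm*(η-δ) <
      (1/b t) * Real.log (∫ ω, Real.exp (ξ₀ * W t ω) ∂μ) - (1/b t) * Real.log 4 := by
    apply Filter.Tendsto.eventually_lt ((hF (ξ₀+sm)).sub tendsto_const_nhds)
      ((hF ξ₀).sub (hinv.mul_const (Real.log 4)))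
    simp only [zero_mul]
    linarith [hkeym]
  have hev : ∀ᶠ t in atTop,
      ((-M + ((1/b t) * Real.log (∫ ω, Real.exp (ξ₀ * W t ω) ∂μ) - (1/b t) * Real.log 2) : ℝ) : EReal)
        ≤ ((1 / b t : ℝ) : EReal) * (μ {ω | W t ω / b t ∈ G}).log := by
    filter_upwards [hbpos, hevp, hevm] with t hbt hp hm
    obtain ⟨hB, ht⟩ := hbt
    have hX : Measurable (W t) := hW t ht
    set B := b t with hBdef
    set X := W t with hXdef
    set Z0 : ℝ := ∫ ω, Real.exp (ξ₀ * X ω) ∂μ with hZ0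
    set Zp : ℝ := ∫ ω, Real.exp ((ξ₀+sp) * X ω) ∂μ with hZp
    set Zm : ℝ := ∫ ω, Real.exp ((ξ₀+sm) * X ω) ∂μ with hZm
    have hZ0pos : 0 < Z0 := integral_exp_pos (hint ξ₀ t ht)
    have hZppos : 0 < Zp := integral_exp_pos (hint (ξ₀+sp) t ht)
    have hZmpos : 0 < Zm := integral_exp_pos (hint (ξ₀+sm) t ht)
    have hBne : B ≠ 0 := hB.ne'
    have hqp : Real.exp (-(sp*B*(η+δ))) * Zp ≤ Z0/4 := by
      have h2 : B * ((1/B) * Real.log Zp - sp*(η+δ)) ≤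
          B * ((1/B) * Real.log Z0 - (1/B)*Real.log 4) :=
        mul_le_mul_of_nonneg_left (le_of_lt hp) hB.le
      have h1 : Real.log Zp - sp*B*(η+δ) ≤ Real.log Z0 - Real.log 4 := by
        field_simp at h2
        linarith [h2]
      calc Real.exp (-(sp*B*(η+δ))) * Zp = Real.exp (Real.log Zp - sp*B*(η+δ)) := by
            rw [Real.exp_sub, Real.exp_log hZppos, Real.exp_neg]; ring
        _ ≤ Real.exp (Real.log Z0 - Real.log 4) := Real.exp_le_exp.2 h1
        _ = Z0/4 := by rw [Real.exp_sub, Real.exp_log hZ0pos, Real.exp_log (by norm_num)]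
    have hqm : Real.exp (-(sm*B*(η-δ))) * Zm ≤ Z0/4 := by
      have h2 : B * ((1/B) * Real.log Zm - sm*(η-δ)) ≤
          B * ((1/B) * Real.log Z0 - (1/B)*Real.log 4) :=
        mul_le_mul_of_nonneg_left (le_of_lt hm) hB.le
      have h1 : Real.log Zm - sm*B*(η-δ) ≤ Real.log Z0 - Real.log 4 := by
        field_simp at h2
        linarith [h2]
      calc Real.exp (-(sm*B*(η-δ))) * Zm = Real.exp (Real.log Zm - sm*B*(η-δ)) := by
            rw [Real.exp_sub, Real.exp_log hZmpos, Real.exp_neg]; ring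
        _ ≤ Real.exp (Real.log Z0 - Real.log 4) := Real.exp_le_exp.2 h1
        _ = Z0/4 := by rw [Real.exp_sub, Real.exp_log hZ0pos, Real.exp_log (by norm_num)]
    set up : Set Ω := {ω | η + δ ≤ X ω / B} with hup
    set lo : Set Ω := {ω | X ω / B ≤ η - δ} with hlo
    set A : Set Ω := {ω | |X ω / B - η| < δ} with hA
    have hXB : Measurable (fun ω => X ω / B) := hX.div_const B
    have mup : MeasurableSet up := measurableSet_le measurable_const hXB
    have mlo : MeasurableSet lo := measurableSet_le hXB measurable_const
    have mA : MeasurableSet A :=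
      measurableSet_lt ((hXB.sub measurable_const).abs) measurable_const
    have hupint : ∫ ω in up, Real.exp (ξ₀ * X ω) ∂μ ≤ Real.exp (-(sp*B*(η+δ))) * Zp := by
      have hpt : ∀ ω ∈ up, Real.exp (ξ₀ * X ω) ≤
          Real.exp (-(sp*B*(η+δ))) * Real.exp ((ξ₀+sp) * X ω) := by
        intro ω hω
        rw [← Real.exp_add, Real.exp_le_exp]
        have h2 : (η+δ) * B ≤ X ω := by
          rw [← le_div_iff₀ hB]; exact hω
        nlinarith [mul_le_mul_of_nonneg_left h2 hsppos.le]
      calc ∫ ω in up, Real.exp (ξ₀ * X ω) ∂μ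
          ≤ ∫ ω in up, Real.exp (-(sp*B*(η+δ))) * Real.exp ((ξ₀+sp) * X ω) ∂μ :=
            setIntegral_mono_on ((hint ξ₀ t ht).integrableOn)
              (((hint (ξ₀+sp) t ht).const_mul _).integrableOn) mup hpt
        _ = Real.exp (-(sp*B*(η+δ))) * ∫ ω in up, Real.exp ((ξ₀+sp) * X ω) ∂μ := by
            rw [integral_const_mul]
        _ ≤ Real.exp (-(sp*B*(η+δ))) * Zp := by
            refine mul_le_mul_of_nonneg_left ?_ (Real.exp_pos _).le
            exact setIntegral_le_integral (hint (ξ₀+sp) t ht)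
              (Filter.Eventually.of_forall (fun ω => (Real.exp_pos _).le))
    have hloint : ∫ ω in lo, Real.exp (ξ₀ * X ω) ∂μ ≤ Real.exp (-(sm*B*(η-δ))) * Zm := by
      have hpt : ∀ ω ∈ lo, Real.exp (ξ₀ * X ω) ≤
          Real.exp (-(sm*B*(η-δ))) * Real.exp ((ξ₀+sm) * X ω) := by
        intro ω hω
        rw [← Real.exp_add, Real.exp_le_exp]
        have h2 : X ω ≤ (η-δ) * B := by
          rw [← div_le_iff₀ hB]; exact hω
        nlinarith [mul_le_mul_of_nonpos_left h2 hsmneg.le]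
      calc ∫ ω in lo, Real.exp (ξ₀ * X ω) ∂μ
          ≤ ∫ ω in lo, Real.exp (-(sm*B*(η-δ))) * Real.exp ((ξ₀+sm) * X ω) ∂μ :=
            setIntegral_mono_on ((hint ξ₀ t ht).integrableOn)
              (((hint (ξ₀+sm) t ht).const_mul _).integrableOn) mlo hpt
        _ = Real.exp (-(sm*B*(η-δ))) * ∫ ω in lo, Real.exp ((ξ₀+sm) * X ω) ∂μ := by
            rw [integral_const_mul]
        _ ≤ Real.exp (-(sm*B*(η-δ))) * Zm := by
            refine mul_le_mul_of_nonneg_left ?_ (Real.exp_pos _).le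
            exact setIntegral_le_integral (hint (ξ₀+sm) t ht)
              (Filter.Eventually.of_forall (fun ω => (Real.exp_pos _).le))
    have hAc : Aᶜ ⊆ up ∪ lo := by
      intro ω hω
      simp only [hA, Set.mem_compl_iff, Set.mem_setOf_eq, not_lt] at hω
      rcases le_abs.1 hω with h | h
      · exact Or.inl (by simp only [hup, Set.mem_setOf_eq]; linarith)
      · exact Or.inr (by simp only [hlo, Set.mem_setOf_eq]; linarith)
    have hdisj : Disjoint up lo := by
      rw [Set.disjoint_left]
      intro ω h1 h2
      simp only [hup, hlo, Set.mem_setOf_eq] at h1 h2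
      linarith
    have hcompl : ∫ ω in Aᶜ, Real.exp (ξ₀ * X ω) ∂μ ≤ Z0/2 := by
      calc ∫ ω in Aᶜ, Real.exp (ξ₀ * X ω) ∂μ
          ≤ ∫ ω in up ∪ lo, Real.exp (ξ₀ * X ω) ∂μ :=
            setIntegral_mono_set ((hint ξ₀ t ht).integrableOn)
              (Filter.Eventually.of_forall (fun ω => (Real.exp_pos _).le))
              (HasSubset.Subset.eventuallyLE hAc)
        _ = (∫ ω in up, Real.exp (ξ₀ * X ω) ∂μ) + ∫ ω in lo, Real.exp (ξ₀ * X ω) ∂μ :=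
            setIntegral_union hdisj mlo ((hint ξ₀ t ht).integrableOn) ((hint ξ₀ t ht).integrableOn)
        _ ≤ Z0/4 + Z0/4 := add_le_add (hupint.trans hqp) (hloint.trans hqm)
        _ = Z0/2 := by ring
    have hAint : Z0/2 ≤ ∫ ω in A, Real.exp (ξ₀ * X ω) ∂μ := by
      have htot := integral_add_compl mA (hint ξ₀ t ht)
      have : (∫ ω in A, Real.exp (ξ₀ * X ω) ∂μ) + ∫ ω in Aᶜ, Real.exp (ξ₀ * X ω) ∂μ = Z0 := htot
      linarith
    have hμA : Real.exp (-(M*B)) * (Z0/2) ≤ (μ A).toReal := by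
      have hpt : ∀ ω ∈ A, Real.exp (-(M*B)) * Real.exp (ξ₀ * X ω) ≤ 1 := by
        intro ω hω
        rw [← Real.exp_add]
        rw [Real.exp_le_one_iff]
        have hω' : |X ω / B - η| < δ := hω
        have h2 : ξ₀ * (X ω/B - η) ≤ |ξ₀| * δ := by
          refine (le_abs_self _).trans ?_
          rw [abs_mul]
          exact mul_le_mul_of_nonneg_left hω'.le (abs_nonneg _)
        have h3 : ξ₀ * (X ω / B) ≤ M := by rw [hM]; nlinarith
        have h4 : ξ₀ * (X ω / B) * B ≤ M * B := mul_le_mul_of_nonneg_right h3 hB.le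
        have h5 : ξ₀ * (X ω / B) * B = ξ₀ * X ω := by field_simp
        have h6 : ξ₀ * X ω ≤ M * B := h5 ▸ h4
        linarith [h6]
      calc Real.exp (-(M*B)) * (Z0/2)
          ≤ Real.exp (-(M*B)) * ∫ ω in A, Real.exp (ξ₀ * X ω) ∂μ :=
            mul_le_mul_of_nonneg_left hAint (Real.exp_pos _).le
        _ = ∫ ω in A, Real.exp (-(M*B)) * Real.exp (ξ₀ * X ω) ∂μ := (integral_const_mul _ _).symm
        _ ≤ ∫ ω in A, (1:ℝ) ∂μ :=
            setIntegral_mono_on (((hint ξ₀ t ht).const_mul _).integrableOn)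
              (integrableOn_const (measure_lt_top μ A).ne) mA hpt
        _ = (μ A).toReal := by rw [setIntegral_const]; simp; rfl
    have hsubG : A ⊆ {ω | X ω / B ∈ G} := by
      intro ω hω
      exact hball (by rw [Metric.mem_ball, Real.dist_eq]; exact hω)
    have hμle : ENNReal.ofReal (Real.exp (-(M*B)) * (Z0/2)) ≤ μ {ω | X ω / B ∈ G} :=
      le_trans (ENNReal.ofReal_le_of_le_toReal hμA) (measure_mono hsubG)
    have hlog : ((Real.log (Real.exp (-(M*B)) * (Z0/2)) : ℝ) : EReal) ≤
        (μ {ω | X ω / B ∈ G}).log := by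
      rw [← ENNReal.log_ofReal_of_pos (by positivity)]
      exact ENNReal.log_monotone hμle
    calc ((-M + ((1/B) * Real.log Z0 - (1/B) * Real.log 2) : ℝ) : EReal)
        = (((1/B) * Real.log (Real.exp (-(M*B)) * (Z0/2)) : ℝ) : EReal) := by
          rw [EReal.coe_eq_coe_iff]
          rw [Real.log_mul (Real.exp_ne_zero _) (by positivity), Real.log_exp,
            Real.log_div hZ0pos.ne' two_ne_zero]
          field_simp
          try ring
      _ = ((1/B : ℝ) : EReal) * ((Real.log (Real.exp (-(M*B)) * (Z0/2)) : ℝ) : EReal) := by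
          rw [← EReal.coe_mul]
      _ ≤ ((1/B : ℝ) : EReal) * (μ {ω | X ω / B ∈ G}).log :=
          mul_le_mul_of_nonneg_left hlog (EReal.coe_nonneg.2 (by positivity))
  have hlim : Tendsto (fun t => -M + ((1/b t) * Real.log (∫ ω, Real.exp (ξ₀ * W t ω) ∂μ)
      - (1/b t) * Real.log 2)) atTop (nhds (-M + (F ξ₀ - 0 * Real.log 2))) :=
    tendsto_const_nhds.add ((hF ξ₀).sub (hinv.mul_const (Real.log 2)))
  have heq : -M + (F ξ₀ - 0 * Real.log 2) = F ξ₀ - ξ₀*η - |ξ₀| * δ := by rw [hM]; ring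
  rw [heq] at hlim
  exact aux_le_liminf hev hlim

lemma lower_bound {Ω : Type*} [MeasurableSpace Ω] (μ : Measure Ω) [IsProbabilityMeasure μ]
    (W : ℝ → Ω → ℝ) (hW : ∀ t : ℝ, 0 < t → Measurable (W t))
    (b : ℝ → ℝ) (hb : Tendsto b atTop atTop)
    (hint : ∀ ξ : ℝ, ∀ t : ℝ, 0 < t → Integrable (fun ω => Real.exp (ξ * W t ω)) μ)
    (F : ℝ → ℝ)
    (hF : ∀ ξ : ℝ, Tendsto (fun t => (1 / b t) * Real.log (∫ ω, Real.exp (ξ * W t ω) ∂μ))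
      atTop (nhds (F ξ)))
    (hFdiff : Differentiable ℝ F) (hFconv : StrictConvexOn ℝ Set.univ F)
    (hF0 : F 0 = 0) (htan : ∀ ξ, ξ * deriv F 0 ≤ F ξ)
    (I : ℝ → EReal) (hI : ∀ η : ℝ, I η = ⨆ ξ : ℝ, ((ξ * η - F ξ : ℝ) : EReal))
    (G : Set ℝ) (hG : IsOpen G) :
    - ⨅ η ∈ G, I η ≤
      Filter.liminf (fun t : ℝ => ((1 / b t : ℝ) : EReal) * (μ {ω | W t ω / b t ∈ G}).log) atTop := by
  set L := fun t : ℝ => ((1 / b t : ℝ) : EReal) * (μ {ω | W t ω / b t ∈ G}).log with hL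
  set η₀ : ℝ := deriv F 0 with hη₀
  -- basic facts about I
  have Inonneg : ∀ η : ℝ, (0:EReal) ≤ I η := by
    intro η
    rw [hI η]
    have := le_iSup (fun ξ : ℝ => ((ξ * η - F ξ : ℝ) : EReal)) 0
    simpa [hF0] using this
  have hIη₀ : I η₀ ≤ 0 := by
    rw [hI η₀]
    refine iSup_le fun ξ => ?_
    have h1 : ξ * η₀ - F ξ ≤ 0 := by linarith [htan ξ]
    exact_mod_cast EReal.coe_le_coe_iff.2 h1
  have Ibetween : ∀ u v x : ℝ, u ≤ x → x ≤ v → I x ≤ max (I u) (I v) := by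
    intro u v x hux hxv
    rw [hI x]
    refine iSup_le fun ξ => ?_
    rcases le_total 0 ξ with hξ | hξ
    · refine le_trans ?_ (le_max_right _ _)
      rw [hI v]
      refine le_trans ?_ (le_iSup (fun ξ : ℝ => ((ξ * v - F ξ : ℝ) : EReal)) ξ)
      exact EReal.coe_le_coe_iff.2 (by nlinarith [mul_le_mul_of_nonneg_left hxv hξ])
    · refine le_trans ?_ (le_max_left _ _)
      rw [hI u]
      refine le_trans ?_ (le_iSup (fun ξ : ℝ => ((ξ * u - F ξ : ℝ) : EReal)) ξ)
      exact EReal.coe_le_coe_iff.2 (by nlinarith [mul_le_mul_of_nonpos_left hux hξ])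
  have ImaxI : ∀ η η' : ℝ, η₀ ≤ η' → η' ≤ η → I η' ≤ I η := by
    intro η η' h1 h2
    exact (Ibetween η₀ η η' h1 h2).trans (max_le (hIη₀.trans (Inonneg η)) le_rfl)
  have ImaxI' : ∀ η η' : ℝ, η ≤ η' → η' ≤ η₀ → I η' ≤ I η := by
    intro η η' h1 h2
    exact (Ibetween η η₀ η' h1 h2).trans (max_le le_rfl (hIη₀.trans (Inonneg η)))
  -- Darboux
  have hOC : Set.OrdConnected (Set.range (deriv F)) := by
    have := Set.ordConnected_univ.image_deriv (f := F) (fun x _ => hFdiff x)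
    rwa [Set.image_univ] at this
  have notmem_above : ∀ η : ℝ, (∀ ξ, deriv F ξ ≠ η) → η₀ < η → ∀ ξ, deriv F ξ < η := by
    intro η hne hgt ξ
    rcases lt_or_ge (deriv F ξ) η with h | h
    · exact h
    · exact absurd (hOC.out ⟨0, rfl⟩ ⟨ξ, rfl⟩ ⟨hgt.le, h⟩) (fun ⟨ζ, hζ⟩ => hne ζ hζ)
  have notmem_below : ∀ η : ℝ, (∀ ξ, deriv F ξ ≠ η) → η < η₀ → ∀ ξ, η < deriv F ξ := by
    intro η hne hlt ξ
    rcases lt_or_ge η (deriv F ξ) with h | h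
    · exact h
    · exact absurd (hOC.out ⟨ξ, rfl⟩ ⟨0, rfl⟩ ⟨h, hlt.le⟩) (fun ⟨ζ, hζ⟩ => hne ζ hζ)
  -- I = ⊤ away from closure of range deriv
  have Itop_above : ∀ η η' : ℝ, (∀ ξ, deriv F ξ < η') → η' < η → I η = ⊤ := by
    intro η η' hall hlt
    rw [hI η, iSup_eq_top]
    intro c hc
    induction c using EReal.rec with
    | top => exact absurd hc (lt_irrefl _)
    | bot => exact ⟨0, by simp [hF0]⟩
    | coe r =>
      set ξ : ℝ := max 1 ((r+1)/(η-η')) with hξdef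
      have hξ1 : (1:ℝ) ≤ ξ := le_max_left _ _
      have hξpos : (0:ℝ) < ξ := lt_of_lt_of_le one_pos hξ1
      have hFle : F ξ < ξ * η' := by
        have hs := hFconv.slope_lt_deriv (Set.mem_univ 0) (Set.mem_univ ξ) hξpos (hFdiff ξ)
        rw [slope_def_field, hF0] at hs
        have := hall ξ
        have h2 : (F ξ - 0) / (ξ - 0) < η' := hs.trans this
        rw [div_lt_iff₀ (by linarith)] at h2
        linarith
      have hbig : r + 1 ≤ ξ * (η - η') := by
        have h1 : (r+1)/(η-η') ≤ ξ := le_max_right _ _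
        rw [div_le_iff₀ (by linarith)] at h1
        nlinarith
      refine ⟨ξ, ?_⟩
      rw [EReal.coe_lt_coe_iff]
      nlinarith
  have Itop_below : ∀ η η' : ℝ, (∀ ξ, η' < deriv F ξ) → η < η' → I η = ⊤ := by
    intro η η' hall hlt
    rw [hI η, iSup_eq_top]
    intro c hc
    induction c using EReal.rec with
    | top => exact absurd hc (lt_irrefl _)
    | bot => exact ⟨0, by simp [hF0]⟩
    | coe r =>
      set ξ : ℝ := -max 1 ((r+1)/(η'-η)) with hξdef
      have hξ1 : ξ ≤ -1 := by
        rw [hξdef, neg_le_neg_iff]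
        exact le_max_left _ _
      have hξneg : ξ < 0 := lt_of_le_of_lt hξ1 (by norm_num)
      have hFle : F ξ < ξ * η' := by
        have hs := hFconv.deriv_lt_slope (Set.mem_univ ξ) (Set.mem_univ 0) hξneg (hFdiff ξ)
        rw [slope_def_field, hF0] at hs
        have := hall ξ
        have h2 : η' < (0 - F ξ) / (0 - ξ) := this.trans hs
        rw [lt_div_iff₀ (by linarith)] at h2
        nlinarith
      have hbig : r + 1 ≤ (-ξ) * (η' - η) := by
        have h1 : (r+1)/(η'-η) ≤ -ξ := by
          rw [hξdef, neg_neg]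
          exact le_max_right _ _
        rw [div_le_iff₀ (by linarith)] at h1
        nlinarith
      refine ⟨ξ, ?_⟩
      rw [EReal.coe_lt_coe_iff]
      nlinarith
  -- the key case: η in the range of the derivative
  have key1 : ∀ η : ℝ, η ∈ G → (∃ ξ₀, deriv F ξ₀ = η) → -(I η) ≤ Filter.liminf L atTop := by
    intro η hη ⟨ξ₀, hξ₀⟩
    have hd : HasDerivAt F η ξ₀ := hξ₀ ▸ (hFdiff ξ₀).hasDerivAt
    obtain ⟨δ₀, hδ₀pos, hball⟩ := Metric.isOpen_iff.1 hG η hη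
    have hstep : ∀ δ : ℝ, 0 < δ → δ ≤ δ₀ →
        ((F ξ₀ - ξ₀*η - |ξ₀| * δ : ℝ) : EReal) ≤ Filter.liminf L atTop := by
      intro δ h1 h2
      exact lb_core μ W hW b hb hint F hF G ξ₀ η δ h1 hd
        ((Metric.ball_subset_ball h2).trans hball)
    have h3 : ((F ξ₀ - ξ₀*η : ℝ) : EReal) ≤ Filter.liminf L atTop := by
      rw [← EReal.ge_of_forall_gt_iff_ge]
      intro z hz
      rw [EReal.coe_lt_coe_iff] at hz
      set δ : ℝ := min δ₀ ((F ξ₀ - ξ₀*η - z)/(|ξ₀|+1)) with hδdef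
      have hδpos : 0 < δ := lt_min hδ₀pos (div_pos (by linarith) (by positivity))
      have hzle : z ≤ F ξ₀ - ξ₀*η - |ξ₀| * δ := by
        have h4 : δ ≤ (F ξ₀ - ξ₀*η - z)/(|ξ₀|+1) := min_le_right _ _
        have h5 : |ξ₀| * δ ≤ |ξ₀| * ((F ξ₀ - ξ₀*η - z)/(|ξ₀|+1)) :=
          mul_le_mul_of_nonneg_left h4 (abs_nonneg _)
        have h6 : |ξ₀| * ((F ξ₀ - ξ₀*η - z)/(|ξ₀|+1)) ≤ F ξ₀ - ξ₀*η - z := by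
          rw [mul_div_assoc']
          rw [div_le_iff₀ (by positivity)]
          nlinarith [abs_nonneg ξ₀]
        linarith
      exact le_trans (EReal.coe_le_coe_iff.2 hzle) (hstep δ hδpos (min_le_left _ _))
    refine le_trans (EReal.neg_le.2 ?_) h3
    rw [show -((F ξ₀ - ξ₀*η : ℝ) : EReal) = ((ξ₀*η - F ξ₀ : ℝ) : EReal) by
      rw [← EReal.coe_neg]; norm_num]
    rw [hI η]
    exact le_iSup (fun ξ : ℝ => ((ξ * η - F ξ : ℝ) : EReal)) ξ₀
  -- reduce to pointwise claim
  have main : ∀ η : ℝ, η ∈ G → -(I η) ≤ Filter.liminf L atTop := by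
    intro η hη
    by_cases hrange : ∃ ξ₀, deriv F ξ₀ = η
    · exact key1 η hη hrange
    push_neg at hrange
    have hne : η ≠ η₀ := fun h => hrange 0 (h ▸ rfl)
    obtain ⟨ε, hεpos, hball⟩ := Metric.isOpen_iff.1 hG η hη
    rcases hne.lt_or_gt with hlt | hlt
    · -- η < η₀
      have hall : ∀ ξ, η < deriv F ξ := notmem_below η hrange hlt
      set η' : ℝ := min η₀ (η + ε/2) with hη'def
      have hη'G : η' ∈ G := by
        apply hball
        rw [Metric.mem_ball, Real.dist_eq, abs_lt]
        constructor
        · have : η < η' := lt_min hlt (by linarith)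
          linarith
        · have : η' ≤ η + ε/2 := min_le_right _ _
          linarith
      have hη'le : η' ≤ η₀ := min_le_left _ _
      have hηη' : η < η' := lt_min hlt (by linarith)
      by_cases hr2 : ∃ ξ₀, deriv F ξ₀ = η'
      · have claim' := key1 η' hη'G hr2
        have hII : I η' ≤ I η := ImaxI' η η' hηη'.le hη'le
        exact le_trans (EReal.neg_le_neg_iff.2 hII) claim'
      · push_neg at hr2
        have hη'lt : η' < η₀ := lt_of_le_of_ne hη'le (fun h => hr2 0 h.symm)
        have hall' : ∀ ξ, η' < deriv F ξ := notmem_below η' hr2 hη'lt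
        rw [Itop_below η η' hall' hηη']
        simp
    · -- η₀ < η
      have hall : ∀ ξ, deriv F ξ < η := notmem_above η hrange hlt
      set η' : ℝ := max η₀ (η - ε/2) with hη'def
      have hη'G : η' ∈ G := by
        apply hball
        rw [Metric.mem_ball, Real.dist_eq, abs_lt]
        constructor
        · have : η - ε/2 ≤ η' := le_max_right _ _
          linarith
        · have : η' < η := max_lt hlt (by linarith)
          linarith
      have hη'ge : η₀ ≤ η' := le_max_left _ _
      have hηη' : η' < η := max_lt hlt (by linarith)
      by_cases hr2 : ∃ ξ₀, deriv F ξ₀ = η'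
      · have claim' := key1 η' hη'G hr2
        have hII : I η' ≤ I η := ImaxI η η' hη'ge hηη'.le
        exact le_trans (EReal.neg_le_neg_iff.2 hII) claim'
      · push_neg at hr2
        have hη'gt : η₀ < η' := lt_of_le_of_ne hη'ge (fun h => hr2 0 h)
        have hall' : ∀ ξ, deriv F ξ < η' := notmem_above η' hr2 hη'gt
        rw [Itop_above η η' hall' hηη']
        simp
  exact EReal.neg_le.2 (le_iInf₂ fun η hη => EReal.neg_le.2 (main η hη))

end GartnerEllisAux

open GartnerEllisAux in
/-- One-dimensional Gärtner–Ellis theorem. -/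
theorem gartner_ellis
    {Ω : Type*} [MeasurableSpace Ω] (μ : Measure Ω) [IsProbabilityMeasure μ]
    (W : ℝ → Ω → ℝ) (hW : ∀ t : ℝ, 0 < t → Measurable (W t))
    (b : ℝ → ℝ) (hb_pos : ∀ t : ℝ, 0 < t → 0 < b t) (hb : Tendsto b atTop atTop)
    (hint : ∀ ξ : ℝ, ∀ t : ℝ, 0 < t →
      Integrable (fun ω => Real.exp (ξ * W t ω)) μ)
    (F : ℝ → ℝ)
    (hF : ∀ ξ : ℝ, Tendsto
      (fun t => (1 / b t) * Real.log (∫ ω, Real.exp (ξ * W t ω) ∂μ))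
      atTop (nhds (F ξ)))
    (hFdiff : Differentiable ℝ F) (hFconv : StrictConvexOn ℝ Set.univ F)
    (I : ℝ → EReal)
    (hI : ∀ η : ℝ, I η = ⨆ ξ : ℝ, ((ξ * η - F ξ : ℝ) : EReal)) :
    (∀ C : Set ℝ, IsClosed C →
      Filter.limsup (fun t : ℝ => ((1 / b t : ℝ) : EReal) *
          (μ {ω | W t ω / b t ∈ C}).log) atTop
        ≤ - ⨅ η ∈ C, I η) ∧
    (∀ G : Set ℝ, IsOpen G →
      - ⨅ η ∈ G, I η ≤
        Filter.liminf (fun t : ℝ => ((1 / b t : ℝ) : EReal) *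
          (μ {ω | W t ω / b t ∈ G}).log) atTop) := by
  have hF0 : F 0 = 0 := by
    have h0 : (fun t => (1 / b t) * Real.log (∫ ω, Real.exp ((0:ℝ) * W t ω) ∂μ)) =
        fun _ => (0:ℝ) := by
      funext t
      simp [integral_const, measure_univ]
    have h1 := hF 0
    rw [h0] at h1
    exact tendsto_nhds_unique h1 tendsto_const_nhds
  have htan : ∀ ξ, ξ * deriv F 0 ≤ F ξ := by
    intro ξ
    rcases lt_trichotomy ξ 0 with h | h | h
    · have hs := hFconv.slope_lt_deriv (Set.mem_univ ξ) (Set.mem_univ 0) h (hFdiff 0)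
      rw [slope_def_field, hF0] at hs
      simp only [zero_sub, sub_zero] at hs
      rw [neg_div_neg_eq] at hs
      rw [div_lt_iff_of_neg h] at hs
      linarith [mul_comm ξ (deriv F 0)]
    · rw [h]; simp [hF0]
    · have hs := hFconv.deriv_lt_slope (Set.mem_univ 0) (Set.mem_univ ξ) h (hFdiff 0)
      rw [slope_def_field, hF0] at hs
      simp only [sub_zero] at hs
      rw [lt_div_iff₀ h] at hs
      linarith [mul_comm ξ (deriv F 0)]
  constructor
  · intro C hC
    exact upper_bound μ W b hb F I hint hF (deriv F 0) htan hF0 hI C hC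
  · intro G hG
    exact lower_bound μ W hW b hb hint F hF hFdiff hFconv hF0 htan I hI G hG
end
end

section
/- Let X be a set, let φ^t : X → X (t ∈ ℝ) be a flow with φ^0 = id and φ^{t+s} = φ^t ∘ φ^s, and let q : X → ℝ be such that for every ρ ∈ X the map s ↦ q(φ^s ρ) is continuous on ℝ. Fix T > 0 and define g̃_T(ρ) := (1/2)∫_0^{T/2} (2s/T − 1)·q(φ^s ρ) ds + (1/2)∫_{−T/2}^0 (2s/T + 1)·q(φ^s ρ) ds. Then for every ρ ∈ X the function t ↦ g̃_T(φ^t ρ) is differentiable at t = 0 with derivative equal to q(ρ) − (1/T)∫_{−T/2}^{T/2} q(φ^s ρ) ds. -/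
open MeasureTheory

private theorem aux_shift_hasDerivAt {g : ℝ → ℝ} (hg : Continuous g) (c : ℝ) :
    HasDerivAt (fun t : ℝ => ∫ u in (0:ℝ)..(c + t), g u) (g c) 0 := by
  have base : HasDerivAt (fun x : ℝ => ∫ u in (0:ℝ)..x, g u) (g (c + 0)) (c + 0) :=
    intervalIntegral.integral_hasDerivAt_right (hg.intervalIntegrable _ _)
      (hg.stronglyMeasurable.stronglyMeasurableAtFilter) hg.continuousAt
  have inner : HasDerivAt (fun t : ℝ => c + t) 1 0 := (hasDerivAt_id 0).const_add c
  have h := base.comp 0 inner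
  simp only [add_zero, mul_one] at h
  exact h

/-- The derivative of `g̃_T` along the flow equals `q - ⟨q⟩_T`. -/
theorem deriv_gT_along_flow
    {X : Type*} (φ : ℝ → X → X) (hφ0 : φ 0 = id)
    (hφadd : ∀ t s : ℝ, φ (t + s) = φ t ∘ φ s)
    (q : X → ℝ) (hq : ∀ ρ : X, Continuous fun s : ℝ => q (φ s ρ))
    (T : ℝ) (hT : 0 < T) (ρ : X) :
    HasDerivAt (fun t : ℝ =>
        (1/2) * (∫ s in (0:ℝ)..(T/2), (2*s/T - 1) * q (φ s (φ t ρ))) +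
        (1/2) * (∫ s in (-(T/2))..(0:ℝ), (2*s/T + 1) * q (φ s (φ t ρ))))
      (q ρ - (1/T) * ∫ s in (-(T/2))..(T/2), q (φ s ρ)) 0 := by
  have hT0 : T ≠ 0 := ne_of_gt hT
  set f : ℝ → ℝ := fun s => q (φ s ρ) with hf_def
  have hf : Continuous f := hq ρ
  have hcomp : ∀ s t : ℝ, q (φ s (φ t ρ)) = f (s + t) := by
    intro s t
    simp only [hf_def, hφadd s t, Function.comp_apply]
  set w1 : ℝ → ℝ := fun u => (2*u/T - 1) * f u with hw1_def
  set w2 : ℝ → ℝ := fun u => (2*u/T + 1) * f u with hw2_def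
  have hw1 : Continuous w1 := by
    apply Continuous.mul _ hf; fun_prop
  have hw2 : Continuous w2 := by
    apply Continuous.mul _ hf; fun_prop
  set W1 : ℝ → ℝ := fun x => ∫ u in (0:ℝ)..x, w1 u with hW1_def
  set W2 : ℝ → ℝ := fun x => ∫ u in (0:ℝ)..x, w2 u with hW2_def
  set F : ℝ → ℝ := fun x => ∫ u in (0:ℝ)..x, f u with hF_def
  -- rewrite the function of t in terms of shifted primitives
  have key : (fun t : ℝ =>
        (1/2) * (∫ s in (0:ℝ)..(T/2), (2*s/T - 1) * q (φ s (φ t ρ))) +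
        (1/2) * (∫ s in (-(T/2))..(0:ℝ), (2*s/T + 1) * q (φ s (φ t ρ))))
      = (fun t : ℝ =>
        (1/2) * ((W1 (T/2 + t) - W1 (0 + t)) - (2/T*t) * (F (T/2 + t) - F (0 + t))) +
        (1/2) * ((W2 (0 + t) - W2 (-(T/2) + t)) - (2/T*t) * (F (0 + t) - F (-(T/2) + t)))) := by
    funext t
    have e1 : (∫ s in (0:ℝ)..(T/2), (2*s/T - 1) * q (φ s (φ t ρ)))
        = ∫ s in (0:ℝ)..(T/2), (w1 (s + t) - (2/T*t) * f (s + t)) := by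
      apply intervalIntegral.integral_congr
      intro s _
      simp only [hcomp s t, hw1_def]
      field_simp
      ring
    have e2 : (∫ s in (-(T/2))..(0:ℝ), (2*s/T + 1) * q (φ s (φ t ρ)))
        = ∫ s in (-(T/2))..(0:ℝ), (w2 (s + t) - (2/T*t) * f (s + t)) := by
      apply intervalIntegral.integral_congr
      intro s _
      simp only [hcomp s t, hw2_def]
      field_simp
      ring
    have hshift : Continuous fun s : ℝ => f (s + t) := hf.comp (continuous_id.add continuous_const)
    have hshift1 : Continuous fun s : ℝ => w1 (s + t) := hw1.comp (continuous_id.add continuous_const)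
    have hshift2 : Continuous fun s : ℝ => w2 (s + t) := hw2.comp (continuous_id.add continuous_const)
    have hi1 : IntervalIntegrable (fun s => w1 (s + t)) volume 0 (T/2) :=
      hshift1.intervalIntegrable _ _
    have hi1' : IntervalIntegrable (fun s => (2/T*t) * f (s + t)) volume 0 (T/2) :=
      (continuous_const.mul hshift).intervalIntegrable _ _
    have hi2 : IntervalIntegrable (fun s => w2 (s + t)) volume (-(T/2)) 0 :=
      hshift2.intervalIntegrable _ _
    have hi2' : IntervalIntegrable (fun s => (2/T*t) * f (s + t)) volume (-(T/2)) 0 :=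
      (continuous_const.mul hshift).intervalIntegrable _ _
    rw [e1, e2, intervalIntegral.integral_sub hi1 hi1', intervalIntegral.integral_sub hi2 hi2',
      intervalIntegral.integral_const_mul, intervalIntegral.integral_const_mul,
      intervalIntegral.integral_comp_add_right w1 t, intervalIntegral.integral_comp_add_right f t,
      intervalIntegral.integral_comp_add_right w2 t,
      show (∫ s in (-(T/2))..(0:ℝ), f (s + t)) = ∫ u in (-(T/2)+t)..(0+t), f u from
        intervalIntegral.integral_comp_add_right f t]
    have s1 : (∫ u in (0+t)..(T/2+t), w1 u) = W1 (T/2 + t) - W1 (0 + t) :=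
      (intervalIntegral.integral_interval_sub_left (hw1.intervalIntegrable _ _)
        (hw1.intervalIntegrable _ _)).symm
    have s2 : (∫ u in (0+t)..(T/2+t), f u) = F (T/2 + t) - F (0 + t) :=
      (intervalIntegral.integral_interval_sub_left (hf.intervalIntegrable _ _)
        (hf.intervalIntegrable _ _)).symm
    have s3 : (∫ u in (-(T/2)+t)..(0+t), w2 u) = W2 (0 + t) - W2 (-(T/2) + t) :=
      (intervalIntegral.integral_interval_sub_left (hw2.intervalIntegrable _ _)
        (hw2.intervalIntegrable _ _)).symm
    have s4 : (∫ u in (-(T/2)+t)..(0+t), f u) = F (0 + t) - F (-(T/2) + t) :=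
      (intervalIntegral.integral_interval_sub_left (hf.intervalIntegrable _ _)
        (hf.intervalIntegrable _ _)).symm
    rw [s1, s2, s3, s4]
  rw [key]
  -- now differentiate
  have hc : HasDerivAt (fun t : ℝ => 2/T*t) (2/T) 0 := by
    simpa using (hasDerivAt_id (0:ℝ)).const_mul (2/T)
  have hA : HasDerivAt (fun t : ℝ => W1 (T/2 + t) - W1 (0 + t)) (w1 (T/2) - w1 0) 0 :=
    (aux_shift_hasDerivAt hw1 (T/2)).sub (aux_shift_hasDerivAt hw1 0)
  have hB : HasDerivAt (fun t : ℝ => F (T/2 + t) - F (0 + t)) (f (T/2) - f 0) 0 :=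
    (aux_shift_hasDerivAt hf (T/2)).sub (aux_shift_hasDerivAt hf 0)
  have hC : HasDerivAt (fun t : ℝ => W2 (0 + t) - W2 (-(T/2) + t)) (w2 0 - w2 (-(T/2))) 0 :=
    (aux_shift_hasDerivAt hw2 0).sub (aux_shift_hasDerivAt hw2 (-(T/2)))
  have hD : HasDerivAt (fun t : ℝ => F (0 + t) - F (-(T/2) + t)) (f 0 - f (-(T/2))) 0 :=
    (aux_shift_hasDerivAt hf 0).sub (aux_shift_hasDerivAt hf (-(T/2)))
  have hG := (((hA.sub (hc.mul hB)).const_mul (1/2)).add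
    ((hC.sub (hc.mul hD)).const_mul (1/2)))
  convert hG using 1
  · rfl
  · rfl
  · rfl
  -- now prove the derivative values agree
  have hsplit : F (T/2) - F (-(T/2)) = ∫ s in (-(T/2))..(T/2), f s :=
    intervalIntegral.integral_interval_sub_left (hf.intervalIntegrable _ _)
      (hf.intervalIntegrable _ _)
  have hq0 : q ρ = f 0 := by simp [hf_def, hφ0]
  have hF0 : F 0 = 0 := intervalIntegral.integral_same
  rw [← hsplit, hq0]
  simp only [hw1_def, hw2_def, add_zero, zero_add, mul_zero, hF0]
  field_simp
  ring
end

section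
/- Let g : ℂ → ℂ be continuous on the closed unit disc {z : |z| ≤ 1}, holomorphic on the open unit disc {z : |z| < 1}, with g(0) ≠ 0, and let M := sup_{|z| ≤ 1} |g(z)|. Then for every t with 0 < t < 1, the set Z_t := {z ∈ ℂ : |z| ≤ t and g(z) = 0} is finite and its cardinality satisfies #Z_t · log(1/t) ≤ log M − log|g(0)|. -/
open Metric Set

lemma factor_zeros (f : ℂ → ℂ) (S : Finset ℂ)
    (hf : DifferentiableOn ℂ f (ball (0:ℂ) 1))
    (hc : ContinuousOn f (closedBall (0:ℂ) 1))
    (hS : ∀ w ∈ S, w ∈ ball (0:ℂ) 1 ∧ f w = 0) :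
    ∃ k : ℂ → ℂ, DifferentiableOn ℂ k (ball (0:ℂ) 1) ∧
      ContinuousOn k (closedBall (0:ℂ) 1) ∧
      ∀ z, f z = (∏ w ∈ S, (z - w)) * k z := by
  classical
  induction S using Finset.induction_on generalizing f with
  | empty => exact ⟨f, hf, hc, fun z => by simp⟩
  | @insert a S ha ih =>
    have haS := hS a (Finset.mem_insert_self a S)
    have hmem : ball (0:ℂ) 1 ∈ nhds a := isOpen_ball.mem_nhds haS.1
    have hmem' : closedBall (0:ℂ) 1 ∈ nhds a := by
      filter_upwards [hmem] with z hz using ball_subset_closedBall hz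
    have hda : DifferentiableAt ℂ f a := (hf.differentiableAt hmem)
    have hf1 : DifferentiableOn ℂ (dslope f a) (ball (0:ℂ) 1) :=
      (Complex.differentiableOn_dslope hmem).mpr hf
    have hc1 : ContinuousOn (dslope f a) (closedBall (0:ℂ) 1) :=
      (continuousOn_dslope hmem').mpr ⟨hc, hda⟩
    have hfz : ∀ z, f z = (z - a) * dslope f a z := by
      intro z
      have := sub_smul_dslope f a z
      rw [haS.2, sub_zero] at this
      simpa [smul_eq_mul] using this.symm
    have hS1 : ∀ w ∈ S, w ∈ ball (0:ℂ) 1 ∧ dslope f a w = 0 := by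
      intro w hw
      have hwa : w ≠ a := fun h => ha (h ▸ hw)
      refine ⟨(hS w (Finset.mem_insert_of_mem hw)).1, ?_⟩
      rw [dslope_of_ne f hwa, slope, (hS w (Finset.mem_insert_of_mem hw)).2, haS.2]
      simp
    obtain ⟨k, hk1, hk2, hk3⟩ := ih (dslope f a) hf1 hc1 hS1
    refine ⟨k, hk1, hk2, fun z => ?_⟩
    rw [hfz z, hk3 z, Finset.prod_insert ha, mul_assoc]

/-- Zero-counting bound via Jensen's formula. -/
theorem jensen_zero_counting
    (g : ℂ → ℂ)
    (hg_cont : ContinuousOn g (closedBall (0:ℂ) 1))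
    (hg_hol : DifferentiableOn ℂ g (ball (0:ℂ) 1))
    (hg0 : g 0 ≠ 0)
    (M : ℝ) (hM : M = sSup ((fun z => ‖g z‖) '' closedBall (0:ℂ) 1)) :
    ∀ t : ℝ, 0 < t → t < 1 →
      {z : ℂ | ‖z‖ ≤ t ∧ g z = 0}.Finite ∧
      ({z : ℂ | ‖z‖ ≤ t ∧ g z = 0}.ncard : ℝ) * Real.log (1/t)
        ≤ Real.log M - Real.log ‖g 0‖ := by
  intro t ht ht1
  classical
  set Z := {z : ℂ | ‖z‖ ≤ t ∧ g z = 0} with hZ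
  -- analyticity
  have han : AnalyticOnNhd ℂ g (ball (0:ℂ) 1) :=
    hg_hol.analyticOnNhd isOpen_ball
  -- finiteness
  have hfin : Z.Finite := by
    by_contra hinf
    have hZsub : Z ⊆ closedBall (0:ℂ) t := by
      intro z hz; simpa [mem_closedBall, Complex.dist_eq] using hz.1
    obtain ⟨x, hxK, hx⟩ := Set.Infinite.exists_accPt_of_subset_isCompact
      (s := Z) hinf (isCompact_closedBall (0:ℂ) t) hZsub
    have hx1 : x ∈ ball (0:ℂ) 1 := by
      have : ‖x‖ ≤ t := mem_closedBall_zero_iff.mp hxK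
      rw [mem_ball_zero_iff]; linarith
    have hfreq : ∃ᶠ z in nhdsWithin x {x}ᶜ, g z = 0 := by
      have := accPt_iff_frequently.mp hx
      rw [frequently_nhdsWithin_iff]
      exact this.mono (fun z hz => ⟨hz.2.2, hz.1⟩)
    have heq : Set.EqOn g 0 (ball (0:ℂ) 1) :=
      han.eqOn_zero_of_preconnected_of_frequently_eq_zero
        (convex_ball (0:ℂ) 1).isPreconnected hx1 hfreq
    exact hg0 (heq (by simp))
  refine ⟨hfin, ?_⟩
  -- the finset of zeros
  set S : Finset ℂ := hfin.toFinset with hSdef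
  have hScard : Z.ncard = S.card := Set.ncard_eq_toFinset_card _ hfin
  have hSmem : ∀ w ∈ S, ‖w‖ ≤ t ∧ g w = 0 := by
    intro w hw; exact hfin.mem_toFinset.mp hw
  have hSball : ∀ w ∈ S, w ∈ ball (0:ℂ) 1 ∧ g w = 0 := by
    intro w hw
    refine ⟨?_, (hSmem w hw).2⟩
    have := (hSmem w hw).1
    rw [mem_ball_zero_iff]; linarith
  obtain ⟨k, hk1, hk2, hk3⟩ := factor_zeros g S hg_hol hg_cont hSball
  -- M is an upper bound
  have hbdd : BddAbove ((fun z => ‖g z‖) '' closedBall (0:ℂ) 1) :=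
    ((isCompact_closedBall (0:ℂ) 1).image_of_continuousOn hg_cont.norm).bddAbove
  have hMub : ∀ z ∈ closedBall (0:ℂ) 1, ‖g z‖ ≤ M := fun z hz =>
    hM ▸ le_csSup hbdd ⟨z, hz, rfl⟩
  -- the auxiliary function h
  set h : ℂ → ℂ := fun z => (∏ w ∈ S, (1 - (starRingEnd ℂ) w * z)) * k z with hh
  have hhdiff : DifferentiableOn ℂ h (ball (0:ℂ) 1) := by
    apply DifferentiableOn.mul _ hk1
    apply DifferentiableOn.fun_finset_prod
    intro w _
    exact (differentiableOn_const _).sub ((differentiableOn_const _).mul differentiableOn_id)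
  have hhcont : ContinuousOn h (closedBall (0:ℂ) 1) := by
    apply ContinuousOn.mul _ hk2
    apply continuousOn_finset_prod
    intro w _
    exact continuousOn_const.sub (continuousOn_const.mul continuousOn_id)
  -- boundary bound
  have hbound : ∀ z ∈ frontier (ball (0:ℂ) 1), ‖h z‖ ≤ M := by
    intro z hz
    rw [frontier_ball (0:ℂ) one_ne_zero] at hz
    have hz1 : ‖z‖ = 1 := by simpa [mem_sphere_iff_norm] using hz
    have key : ∀ w : ℂ, ‖1 - (starRingEnd ℂ) w * z‖ = ‖z - w‖ := by
      intro w
      have : 1 - (starRingEnd ℂ) w * z = (starRingEnd ℂ) (z - w) * z := by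
        have hzz : (starRingEnd ℂ) z * z = 1 := by
          rw [mul_comm, Complex.mul_conj', hz1]
          norm_num
        rw [map_sub, sub_mul, hzz]
      rw [this, norm_mul, RCLike.norm_conj, hz1, mul_one]
    have : ‖h z‖ = ‖g z‖ := by
      rw [hh, hk3 z]
      simp only [norm_mul, norm_prod]
      congr 1
      exact Finset.prod_congr rfl (fun w _ => key w)
    rw [this]
    exact hMub z (sphere_subset_closedBall hz)
  -- maximum modulus
  have hk0 : ‖k 0‖ ≤ M := by
    have h0 : ‖h 0‖ ≤ M := by
      apply Complex.norm_le_of_forall_mem_frontier_norm_le isBounded_ball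
        ⟨hhdiff, ?_⟩ hbound
      · rw [closure_ball (0:ℂ) one_ne_zero]
        exact mem_closedBall_self zero_le_one
      · rw [closure_ball (0:ℂ) one_ne_zero]
        exact hhcont
    have : h 0 = k 0 := by simp [hh]
    rwa [this] at h0
  -- split g 0
  have hg0eq : ‖g 0‖ = (∏ w ∈ S, ‖w‖) * ‖k 0‖ := by
    rw [hk3 0]
    simp only [norm_mul, norm_prod, zero_sub, norm_neg]
  have hprod_le : (∏ w ∈ S, ‖w‖) ≤ t ^ S.card := by
    rw [← Finset.prod_const]
    exact Finset.prod_le_prod (fun w _ => norm_nonneg w) (fun w hw => (hSmem w hw).1)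
  have hg0pos : 0 < ‖g 0‖ := norm_pos_iff.mpr hg0
  have hchain : ‖g 0‖ ≤ t ^ S.card * M := by
    rw [hg0eq]
    have hk0nn : 0 ≤ ‖k 0‖ := norm_nonneg _
    calc (∏ w ∈ S, ‖w‖) * ‖k 0‖ ≤ t ^ S.card * ‖k 0‖ :=
          mul_le_mul_of_nonneg_right hprod_le hk0nn
      _ ≤ t ^ S.card * M := mul_le_mul_of_nonneg_left hk0 (pow_nonneg ht.le _)
  have hMpos : 0 < M := by
    by_contra hMn
    push_neg at hMn
    nlinarith [pow_nonneg ht.le S.card, hg0pos]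
  have hlog : Real.log ‖g 0‖ ≤ (S.card : ℝ) * Real.log t + Real.log M := by
    calc Real.log ‖g 0‖ ≤ Real.log (t ^ S.card * M) := Real.log_le_log hg0pos hchain
      _ = (S.card : ℝ) * Real.log t + Real.log M := by
          rw [Real.log_mul (by positivity) hMpos.ne', Real.log_pow]
  rw [hScard]
  rw [one_div, Real.log_inv]
  nlinarith [hlog]
end

section
/- Let δ > 0 and let (f_n)_{n ∈ ℕ} be a sequence of functions holomorphic on the open disc D = {z ∈ ℂ : |z| < δ} that is uniformly bounded: there is C > 0 with |f_n(z)| ≤ C for all n and all z ∈ D. Let g be holomorphic on D and suppose that f_n(x) → g(x) as n → ∞ for every real x with |x| < δ (viewing x as a point of D). Then f_n → g uniformly on every compact subset of D, and moreover for every integer k ≥ 0 the k-th derivatives f_n^{(k)} converge to g^{(k)} uniformly on every compact subset of D. -/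
open Filter Topology Metric

/-- Iterated derivatives of a holomorphic function on an open ball are holomorphic. -/
lemma vm_holo_iteratedDeriv {δ : ℝ} {F : ℂ → ℂ}
    (hF : DifferentiableOn ℂ F (ball (0:ℂ) δ)) (k : ℕ) :
    DifferentiableOn ℂ (iteratedDeriv k F) (ball (0:ℂ) δ) := by
  induction k with
  | zero => simpa [iteratedDeriv_zero] using hF
  | succ k ih =>
    rw [iteratedDeriv_succ]
    exact ((ih.analyticOnNhd isOpen_ball).deriv).differentiableOn

/-- Cauchy estimates for iterated derivatives. -/
lemma vm_cauchy_bound {C : ℝ} {s : NNReal} {F : ℂ → ℂ} {c : ℂ} (hs : 0 < s)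
    (hF : DifferentiableOn ℂ F (closedBall c s)) (hC : 0 ≤ C)
    (hb : ∀ z ∈ closedBall c (s:ℝ), ‖F z‖ ≤ C) (j : ℕ) :
    ‖iteratedDeriv j F c‖ ≤ C * (j.factorial : ℝ) / (s:ℝ) ^ j := by
  have hps := hF.hasFPowerSeriesOnBall hs
  set p := cauchyPowerSeries F c s with hp
  have h1 : j.factorial • (p j fun _ => (1:ℂ)) = iteratedFDeriv ℂ j F c fun _ => 1 :=
    hps.factorial_smul (1:ℂ) j
  have h2 : iteratedDeriv j F c = iteratedFDeriv ℂ j F c fun _ => 1 :=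
    iteratedDeriv_eq_iteratedFDeriv
  have hint : (2 * Real.pi)⁻¹ * ∫ θ : ℝ in (0)..2 * Real.pi, ‖F (circleMap c s θ)‖ ≤ C := by
    have hb' : ∀ θ ∈ Set.uIoc (0:ℝ) (2 * Real.pi), ‖(‖F (circleMap c s θ)‖)‖ ≤ C := by
      intro θ _
      rw [Real.norm_eq_abs, abs_of_nonneg (norm_nonneg _)]
      exact hb _ (sphere_subset_closedBall (circleMap_mem_sphere c s.coe_nonneg θ))
    have := intervalIntegral.norm_integral_le_of_norm_le_const
      (C := C) (f := fun θ : ℝ => ‖F (circleMap c s θ)‖) (a := 0) (b := 2 * Real.pi) hb'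
    have h2π : (0:ℝ) < 2 * Real.pi := Real.two_pi_pos
    have hI : ∫ θ : ℝ in (0)..2 * Real.pi, ‖F (circleMap c s θ)‖ ≤ C * (2 * Real.pi) := by
      calc ∫ θ : ℝ in (0)..2 * Real.pi, ‖F (circleMap c s θ)‖
          ≤ ‖∫ θ : ℝ in (0)..2 * Real.pi, ‖F (circleMap c s θ)‖‖ := le_abs_self _
        _ ≤ C * |2 * Real.pi - 0| := this
        _ = C * (2 * Real.pi) := by rw [sub_zero, abs_of_pos h2π]
    calc (2 * Real.pi)⁻¹ * ∫ θ : ℝ in (0)..2 * Real.pi, ‖F (circleMap c s θ)‖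
        ≤ (2 * Real.pi)⁻¹ * (C * (2 * Real.pi)) := by
          exact mul_le_mul_of_nonneg_left hI (by positivity)
      _ = C := by field_simp
  have hnorm : ‖p j‖ ≤ C * ((s:ℝ))⁻¹ ^ j := by
    refine (norm_cauchyPowerSeries_le F c s j).trans ?_
    rw [abs_of_nonneg s.coe_nonneg]
    exact mul_le_mul_of_nonneg_right hint (by positivity)
  have happ : ‖p j fun _ => (1:ℂ)‖ ≤ ‖p j‖ := by
    have := (p j).le_opNorm fun _ => (1:ℂ)
    simpa using this
  have : ‖iteratedDeriv j F c‖ = (j.factorial : ℝ) * ‖p j fun _ => (1:ℂ)‖ := by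
    rw [h2, ← h1]
    simp [norm_smul]
  rw [this]
  calc (j.factorial : ℝ) * ‖p j fun _ => (1:ℂ)‖ ≤ (j.factorial : ℝ) * (C * ((s:ℝ))⁻¹ ^ j) :=
        mul_le_mul_of_nonneg_left (happ.trans hnorm) (by positivity)
    _ = C * (j.factorial : ℝ) / (s:ℝ) ^ j := by
        rw [inv_pow]
        ring

/-- First-order Taylor estimate on a closed ball from a bound on the second derivative. -/
lemma vm_taylor_est {δ ρ M : ℝ} {F : ℂ → ℂ} (hF : DifferentiableOn ℂ F (ball (0:ℂ) δ))
    (hρ : ρ < δ)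
    (hM : ∀ w ∈ closedBall (0:ℂ) ρ, ‖deriv (deriv F) w‖ ≤ M) {x y : ℂ}
    (hx : x ∈ closedBall (0:ℂ) ρ) (hy : y ∈ closedBall (0:ℂ) ρ) :
    ‖F y - F x - (y - x) * deriv F x‖ ≤ M * ‖y - x‖ * ‖y - x‖ := by
  have hsub : closedBall (0:ℂ) ρ ⊆ ball (0:ℂ) δ := closedBall_subset_ball hρ
  have hA : AnalyticOnNhd ℂ F (ball (0:ℂ) δ) := hF.analyticOnNhd isOpen_ball
  have hA' : AnalyticOnNhd ℂ (deriv F) (ball (0:ℂ) δ) := hA.deriv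
  -- step 1 : deriv F is M-Lipschitz on the closed ball
  have lip : ∀ z ∈ closedBall (0:ℂ) ρ, ‖deriv F z - deriv F x‖ ≤ M * ‖z - x‖ := by
    intro z hz
    refine (convex_closedBall (0:ℂ) ρ).norm_image_sub_le_of_norm_deriv_le
      (fun w hw => (hA' w (hsub hw)).differentiableAt) hM hx hz
  -- step 2
  set φ : ℂ → ℂ := fun z => F z - z * deriv F x with hφ
  have hseg : segment ℝ x y ⊆ closedBall (0:ℂ) ρ :=
    (convex_closedBall (0:ℂ) ρ).segment_subset hx hy
  have hseg' : segment ℝ x y ⊆ closedBall x ‖y - x‖ := by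
    refine (convex_closedBall x ‖y - x‖).segment_subset ?_ ?_
    · exact mem_closedBall_self (norm_nonneg _)
    · simp [mem_closedBall, dist_eq_norm]
  have hder : ∀ z ∈ segment ℝ x y,
      HasDerivWithinAt φ (deriv F z - deriv F x) (segment ℝ x y) z := by
    intro z hz
    have h1 : HasDerivAt F (deriv F z) z :=
      ((hA z (hsub (hseg hz))).differentiableAt).hasDerivAt
    have h2 : HasDerivAt (fun w : ℂ => w * deriv F x) (deriv F x) z := by
      simpa using (hasDerivAt_id z).mul_const (deriv F x)
    exact ((h1.sub h2)).hasDerivWithinAt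
  have hbound : ∀ z ∈ segment ℝ x y, ‖deriv F z - deriv F x‖ ≤ M * ‖y - x‖ := by
    intro z hz
    refine (lip z (hseg hz)).trans ?_
    have hz' := hseg' hz
    rw [mem_closedBall, dist_eq_norm] at hz'
    have hM0 : 0 ≤ M := le_trans (norm_nonneg _) (hM x hx)
    exact mul_le_mul_of_nonneg_left hz' hM0
  have := Convex.norm_image_sub_le_of_norm_hasDerivWithin_le hder hbound
    (convex_segment x y) (left_mem_segment ℝ x y) (right_mem_segment ℝ x y)
  calc ‖F y - F x - (y - x) * deriv F x‖ = ‖φ y - φ x‖ := by rw [hφ]; ring_nf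
    _ ≤ M * ‖y - x‖ * ‖y - x‖ := this

/-- Norm bound for a sum with geometric tail. -/
lemma vm_tail {u : ℕ → ℂ} {S : ℂ} (hu : HasSum u S) {A q : ℝ} (hq0 : 0 ≤ q) (hq : q < 1)
    (hb : ∀ j, ‖u j‖ ≤ A * q ^ j) (J : ℕ) :
    ‖S‖ ≤ (∑ j ∈ Finset.range J, ‖u j‖) + A * q ^ J / (1 - q) := by
  have hA : 0 ≤ A := by
    have := (norm_nonneg (u 0)).trans (hb 0)
    simpa using this
  have htail : HasSum (fun j => u (j + J)) (S - ∑ j ∈ Finset.range J, u j) := by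
    rw [hasSum_nat_add_iff J]
    simpa using hu
  have hsummg : Summable fun j : ℕ => A * q ^ J * q ^ j :=
    (summable_geometric_of_lt_one hq0 hq).mul_left _
  have hsumm : Summable fun j : ℕ => ‖u (j + J)‖ := by
    refine Summable.of_nonneg_of_le (fun j => norm_nonneg _) (fun j => ?_) hsummg
    calc ‖u (j + J)‖ ≤ A * q ^ (j + J) := hb _
      _ = A * q ^ J * q ^ j := by rw [pow_add]; ring
  have h1 : ‖S - ∑ j ∈ Finset.range J, u j‖ ≤ A * q ^ J / (1 - q) := by
    calc ‖S - ∑ j ∈ Finset.range J, u j‖ ≤ ∑' j : ℕ, ‖u (j + J)‖ := by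
          rw [← htail.tsum_eq]; exact norm_tsum_le_tsum_norm hsumm
      _ ≤ ∑' j : ℕ, A * q ^ J * q ^ j := Summable.tsum_le_tsum (fun j => by
            calc ‖u (j + J)‖ ≤ A * q ^ (j + J) := hb _
              _ = A * q ^ J * q ^ j := by rw [pow_add]; ring) hsumm hsummg
      _ = A * q ^ J * (1 - q)⁻¹ := by
          rw [tsum_mul_left, tsum_geometric_of_lt_one hq0 hq]
      _ = A * q ^ J / (1 - q) := by rw [div_eq_mul_inv]
  calc ‖S‖ = ‖(∑ j ∈ Finset.range J, u j) + (S - ∑ j ∈ Finset.range J, u j)‖ := by ring_nf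
    _ ≤ ‖∑ j ∈ Finset.range J, u j‖ + ‖S - ∑ j ∈ Finset.range J, u j‖ := norm_add_le _ _
    _ ≤ (∑ j ∈ Finset.range J, ‖u j‖) + A * q ^ J / (1 - q) :=
        add_le_add (norm_sum_le _ _) h1

/-- Pointwise convergence of all iterated derivatives on the real segment. -/
lemma vm_pointwise
    (δ : ℝ) (hδ : 0 < δ) (f : ℕ → ℂ → ℂ) (g : ℂ → ℂ)
    (hf : ∀ n : ℕ, DifferentiableOn ℂ (f n) (ball (0:ℂ) δ))
    (C : ℝ) (hC : 0 < C)
    (hbd : ∀ n : ℕ, ∀ z ∈ ball (0:ℂ) δ, ‖f n z‖ ≤ C)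
    (hg : DifferentiableOn ℂ g (ball (0:ℂ) δ))
    (hconv : ∀ x : ℝ, |x| < δ →
      Tendsto (fun n => f n (x : ℂ)) atTop (nhds (g (x : ℂ)))) :
    ∀ k : ℕ, ∀ x : ℝ, |x| < δ →
      Tendsto (fun n => iteratedDeriv k (f n) (x : ℂ)) atTop
        (nhds (iteratedDeriv k g (x : ℂ))) := by
  intro k
  induction k with
  | zero => simpa [iteratedDeriv_zero] using hconv
  | succ k ih =>
    intro x hx
    set ρ : ℝ := (|x| + δ) / 2 with hρdef
    have hxρ : |x| < ρ := by rw [hρdef]; linarith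
    have hρδ : ρ < δ := by rw [hρdef]; linarith
    have hρ0 : 0 ≤ ρ := le_of_lt (lt_of_le_of_lt (abs_nonneg x) hxρ)
    set s : ℝ := (δ - ρ) / 2 with hsdef
    have hs0 : 0 < s := by rw [hsdef]; linarith
    -- uniform second-derivative bound for the f n on closedBall 0 ρ
    have hball : ∀ w : ℂ, w ∈ closedBall (0:ℂ) ρ → closedBall w s ⊆ ball (0:ℂ) δ := by
      intro w hw z hz
      rw [mem_closedBall, dist_zero_right] at hw
      rw [mem_closedBall] at hz
      rw [mem_ball, dist_zero_right]
      calc ‖z‖ = ‖(z - w) + w‖ := by ring_nf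
        _ ≤ ‖z - w‖ + ‖w‖ := norm_add_le _ _
        _ ≤ s + ρ := add_le_add (by rwa [← dist_eq_norm]) hw
        _ < δ := by rw [hsdef]; linarith
    set M : ℝ := C * (k + 2).factorial / s ^ (k + 2) with hMdef
    have hM0 : 0 ≤ M := by positivity
    have hMf : ∀ n : ℕ, ∀ w ∈ closedBall (0:ℂ) ρ,
        ‖deriv (deriv (iteratedDeriv k (f n))) w‖ ≤ M := by
      intro n w hw
      have h1 : deriv (deriv (iteratedDeriv k (f n))) = iteratedDeriv (k + 2) (f n) := by
        rw [iteratedDeriv_succ, iteratedDeriv_succ]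
      rw [h1]
      have := vm_cauchy_bound (C := C) (s := ⟨s, hs0.le⟩) (F := f n) (c := w)
        (by exact_mod_cast hs0)
        ((hf n).mono (by exact hball w hw)) hC.le
        (fun z hz => hbd n z (hball w hw (by exact hz))) (k + 2)
      exact this
    -- second derivative bound for g on closedBall 0 ρ
    obtain ⟨M', hM'⟩ : ∃ M', ∀ w ∈ closedBall (0:ℂ) ρ,
        ‖deriv (deriv (iteratedDeriv k g)) w‖ ≤ M' := by
      have hcont : ContinuousOn (deriv (deriv (iteratedDeriv k g))) (closedBall (0:ℂ) ρ) := by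
        have : deriv (deriv (iteratedDeriv k g)) = iteratedDeriv (k + 2) g := by
          rw [iteratedDeriv_succ, iteratedDeriv_succ]
        rw [this]
        exact (vm_holo_iteratedDeriv hg (k + 2)).continuousOn.mono (closedBall_subset_ball hρδ)
      exact (isCompact_closedBall _ _).exists_bound_of_continuousOn hcont
    set K : ℝ := M + max M' 0 + 1 with hKdef
    have hK0 : 0 < K := by positivity
    have hKf : ∀ n : ℕ, ∀ w ∈ closedBall (0:ℂ) ρ,
        ‖deriv (deriv (iteratedDeriv k (f n))) w‖ ≤ K := fun n w hw =>
      (hMf n w hw).trans (by rw [hKdef]; nlinarith [le_max_right M' (0:ℝ)])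
    have hKg : ∀ w ∈ closedBall (0:ℂ) ρ,
        ‖deriv (deriv (iteratedDeriv k g)) w‖ ≤ K := fun w hw =>
      (hM' w hw).trans (by rw [hKdef]; nlinarith [le_max_left M' (0:ℝ)])
    -- now the epsilon argument
    rw [Metric.tendsto_atTop]
    intro ε hε
    set h : ℝ := min ((ρ - |x|) / 2) (ε / (4 * K)) with hhdef
    have hh0 : 0 < h := by
      apply lt_min <;> [linarith; positivity]
    have hhρ : |x| + h ≤ ρ := by
      have : h ≤ (ρ - |x|) / 2 := min_le_left _ _
      linarith
    have hhK : K * h ≤ ε / 4 := by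
      have h1 : h ≤ ε / (4 * K) := min_le_right _ _
      calc K * h ≤ K * (ε / (4 * K)) := mul_le_mul_of_nonneg_left h1 hK0.le
        _ = ε / 4 := by field_simp
    set y : ℝ := x + h with hydef
    have hyρ : |y| ≤ ρ := by
      rw [hydef]
      calc |x + h| ≤ |x| + |h| := abs_add_le _ _
        _ = |x| + h := by rw [abs_of_pos hh0]
        _ ≤ ρ := hhρ
    have hyδ : |y| < δ := lt_of_le_of_lt hyρ hρδ
    have hxmem : (x:ℂ) ∈ closedBall (0:ℂ) ρ := by
      rw [mem_closedBall, dist_zero_right, Complex.norm_real, Real.norm_eq_abs]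
      exact hxρ.le
    have hymem : (y:ℂ) ∈ closedBall (0:ℂ) ρ := by
      rw [mem_closedBall, dist_zero_right, Complex.norm_real, Real.norm_eq_abs]
      exact hyρ
    have hyx : (y:ℂ) - (x:ℂ) = (h:ℝ) := by
      rw [hydef]; push_cast; ring
    have hyxnorm : ‖(y:ℂ) - (x:ℂ)‖ = h := by
      rw [hyx, Complex.norm_real, Real.norm_eq_abs, abs_of_pos hh0]
    -- Taylor estimates
    have htf : ∀ n : ℕ, ‖iteratedDeriv k (f n) y - iteratedDeriv k (f n) x -
        ((y:ℂ) - (x:ℂ)) * deriv (iteratedDeriv k (f n)) x‖ ≤ K * h * h := by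
      intro n
      have := vm_taylor_est (vm_holo_iteratedDeriv (hf n) k) hρδ (hKf n) hxmem hymem
      rwa [hyxnorm] at this
    have htg : ‖iteratedDeriv k g y - iteratedDeriv k g x -
        ((y:ℂ) - (x:ℂ)) * deriv (iteratedDeriv k g) x‖ ≤ K * h * h := by
      have := vm_taylor_est (vm_holo_iteratedDeriv hg k) hρδ hKg hxmem hymem
      rwa [hyxnorm] at this
    -- convergence at x and y from the induction hypothesis
    have hcx := ih x hx
    have hcy := ih y hyδ
    rw [Metric.tendsto_atTop] at hcx hcy
    obtain ⟨N₁, hN₁⟩ := hcx (ε * h / 8) (by positivity)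
    obtain ⟨N₂, hN₂⟩ := hcy (ε * h / 8) (by positivity)
    refine ⟨max N₁ N₂, fun n hn => ?_⟩
    have hn₁ := hN₁ n (le_trans (le_max_left _ _) hn)
    have hn₂ := hN₂ n (le_trans (le_max_right _ _) hn)
    rw [dist_eq_norm] at hn₁ hn₂ ⊢
    rw [iteratedDeriv_succ, iteratedDeriv_succ]
    set Fn := iteratedDeriv k (f n) with hFn
    set G := iteratedDeriv k g with hG
    have hkey : deriv Fn x - deriv G x = ((h:ℂ))⁻¹ *
        (-(Fn y - Fn x - ((y:ℂ) - (x:ℂ)) * deriv Fn x)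
          + (Fn y - G y) - (Fn x - G x)
          + (G y - G x - ((y:ℂ) - (x:ℂ)) * deriv G x)) := by
      rw [hyx]
      have hh0' : (h:ℂ) ≠ 0 := by exact_mod_cast hh0.ne'
      field_simp
      ring
    have hnorm : ‖deriv Fn x - deriv G x‖ ≤
        h⁻¹ * (K * h * h + ε * h / 8 + ε * h / 8 + K * h * h) := by
      rw [hkey]
      rw [norm_mul]
      have hinv : ‖((h:ℂ))⁻¹‖ = h⁻¹ := by
        rw [norm_inv, Complex.norm_real, Real.norm_eq_abs, abs_of_pos hh0]
      rw [hinv]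
      refine mul_le_mul_of_nonneg_left ?_ (by positivity)
      calc ‖-(Fn y - Fn x - ((y:ℂ) - (x:ℂ)) * deriv Fn x)
            + (Fn y - G y) - (Fn x - G x)
            + (G y - G x - ((y:ℂ) - (x:ℂ)) * deriv G x)‖
          ≤ ‖-(Fn y - Fn x - ((y:ℂ) - (x:ℂ)) * deriv Fn x)
            + (Fn y - G y) - (Fn x - G x)‖
            + ‖G y - G x - ((y:ℂ) - (x:ℂ)) * deriv G x‖ := norm_add_le _ _
        _ ≤ (‖-(Fn y - Fn x - ((y:ℂ) - (x:ℂ)) * deriv Fn x)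
            + (Fn y - G y)‖ + ‖Fn x - G x‖)
            + ‖G y - G x - ((y:ℂ) - (x:ℂ)) * deriv G x‖ :=
            add_le_add_left (norm_sub_le _ _) _
        _ ≤ ((‖-(Fn y - Fn x - ((y:ℂ) - (x:ℂ)) * deriv Fn x)‖
            + ‖Fn y - G y‖) + ‖Fn x - G x‖)
            + ‖G y - G x - ((y:ℂ) - (x:ℂ)) * deriv G x‖ :=
            add_le_add_left (add_le_add_left (norm_add_le _ _) _) _
        _ ≤ ((K * h * h + ε * h / 8) + ε * h / 8) + K * h * h := by
            refine add_le_add (add_le_add (add_le_add ?_ hn₂.le) hn₁.le) htg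
            rw [norm_neg]; exact htf n
        _ = K * h * h + ε * h / 8 + ε * h / 8 + K * h * h := by ring
    have : h⁻¹ * (K * h * h + ε * h / 8 + ε * h / 8 + K * h * h)
        = 2 * (K * h) + ε / 4 := by field_simp; ring
    rw [this] at hnorm
    have : 2 * (K * h) + ε / 4 ≤ 2 * (ε / 4) + ε / 4 := by linarith
    calc ‖deriv Fn x - deriv G x‖ ≤ 2 * (K * h) + ε / 4 := hnorm
      _ ≤ 2 * (ε / 4) + ε / 4 := this
      _ < ε := by linarith

/-- Uniform convergence on closed balls. -/
lemma vm_unif_closedBall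
    (δ : ℝ) (hδ : 0 < δ) (f : ℕ → ℂ → ℂ) (g : ℂ → ℂ)
    (hf : ∀ n : ℕ, DifferentiableOn ℂ (f n) (ball (0:ℂ) δ))
    (C : ℝ) (hC : 0 < C)
    (hbd : ∀ n : ℕ, ∀ z ∈ ball (0:ℂ) δ, ‖f n z‖ ≤ C)
    (hg : DifferentiableOn ℂ g (ball (0:ℂ) δ))
    (hconv : ∀ x : ℝ, |x| < δ →
      Tendsto (fun n => f n (x : ℂ)) atTop (nhds (g (x : ℂ))))
    {ρ : ℝ} (hρ0 : 0 ≤ ρ) (hρδ : ρ < δ) :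
    TendstoUniformlyOn f g atTop (closedBall (0:ℂ) ρ) := by
  set r : ℝ := (ρ + δ) / 2 with hrdef
  have hρr : ρ < r := by rw [hrdef]; linarith
  have hrδ : r < δ := by rw [hrdef]; linarith
  have hr0 : 0 < r := lt_of_le_of_lt hρ0 hρr
  set q : ℝ := ρ / r with hqdef
  have hq0 : 0 ≤ q := div_nonneg hρ0 hr0.le
  have hq1 : q < 1 := (div_lt_one hr0).2 hρr
  clear_value q r
  set d : ℕ → ℕ → ℂ := fun n j => iteratedDeriv j (f n) 0 with hddef
  set e : ℕ → ℂ := fun j => iteratedDeriv j g 0 with hedef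
  have hsub : closedBall (0:ℂ) r ⊆ ball (0:ℂ) δ := closedBall_subset_ball hrδ
  have hdbound : ∀ n j, ‖d n j‖ ≤ C * (j.factorial : ℝ) / r ^ j := by
    intro n j
    have := vm_cauchy_bound (C := C) (s := ⟨r, hr0.le⟩) (F := f n) (c := 0)
      (by exact_mod_cast hr0) ((hf n).mono (by exact hsub)) hC.le
      (fun z hz => hbd n z (hsub (by exact hz))) j
    exact this
  have hdconv : ∀ j, Tendsto (fun n => d n j) atTop (nhds (e j)) := by
    intro j
    have := vm_pointwise δ hδ f g hf C hC hbd hg hconv j 0 (by simpa using hδ)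
    simpa using this
  have hebound : ∀ j, ‖e j‖ ≤ C * (j.factorial : ℝ) / r ^ j := fun j =>
    le_of_tendsto ((hdconv j).norm) (Eventually.of_forall fun n => hdbound n j)
  -- pointwise bound on the summand
  have hsum : ∀ n, ∀ z ∈ closedBall (0:ℂ) ρ,
      HasSum (fun j : ℕ => (j.factorial : ℂ)⁻¹ • z ^ j • (d n j - e j)) (f n z - g z) := by
    intro n z hz
    have hz' : z ∈ ball (0:ℂ) δ := (closedBall_subset_ball hρδ) hz
    have h1 := Complex.hasSum_taylorSeries_on_ball (hf n) hz'
    have h2 := Complex.hasSum_taylorSeries_on_ball hg hz'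
    have := h1.sub h2
    simp only [sub_zero] at this
    convert this using 2 with j
    · rfl
    · rw [smul_sub, smul_sub]
  have hterm : ∀ n, ∀ z ∈ closedBall (0:ℂ) ρ, ∀ j,
      ‖(j.factorial : ℂ)⁻¹ • z ^ j • (d n j - e j)‖ ≤ 2 * C * q ^ j := by
    intro n z hz j
    rw [mem_closedBall, dist_zero_right] at hz
    have h1 : ‖(j.factorial : ℂ)⁻¹ • z ^ j • (d n j - e j)‖
        = ((j.factorial : ℝ))⁻¹ * ‖z‖ ^ j * ‖d n j - e j‖ := by
      rw [norm_smul, norm_smul, norm_inv, norm_pow]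
      have : ‖(j.factorial : ℂ)‖ = (j.factorial : ℝ) := by
        simp
      rw [this]; ring
    rw [h1]
    have h2 : ‖d n j - e j‖ ≤ 2 * C * (j.factorial : ℝ) / r ^ j := by
      calc ‖d n j - e j‖ ≤ ‖d n j‖ + ‖e j‖ := norm_sub_le _ _
        _ ≤ C * (j.factorial : ℝ) / r ^ j + C * (j.factorial : ℝ) / r ^ j := add_le_add (hdbound n j) (hebound j)
        _ = 2 * C * (j.factorial : ℝ) / r ^ j := by ring
    calc ((j.factorial : ℝ))⁻¹ * ‖z‖ ^ j * ‖d n j - e j‖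
        ≤ ((j.factorial : ℝ))⁻¹ * ρ ^ j * (2 * C * (j.factorial : ℝ) / r ^ j) := by
          refine mul_le_mul ?_ h2 (norm_nonneg _) (by positivity)
          exact mul_le_mul_of_nonneg_left (pow_le_pow_left₀ (norm_nonneg z) hz j)
            (by positivity)
      _ = 2 * C * q ^ j := by
          rw [hqdef, div_pow]
          have : (j.factorial : ℝ) ≠ 0 := by positivity
          field_simp
  -- epsilon argument
  rw [Metric.tendstoUniformlyOn_iff]
  intro ε hε
  -- choose J with tail < ε/2
  obtain ⟨J, hJ⟩ : ∃ J : ℕ, 2 * C * q ^ J / (1 - q) < ε / 2 := by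
    have h0 : Tendsto (fun J : ℕ => 2 * C * q ^ J / (1 - q)) atTop (nhds 0) := by
      have := tendsto_pow_atTop_nhds_zero_of_lt_one hq0 hq1
      have h' := (this.const_mul (2 * C)).div_const (1 - q)
      simpa using h'
    have := (h0.eventually (gt_mem_nhds (by positivity : (0:ℝ) < ε / 2))).exists
    exact this
  -- finite sums tend to zero
  have hfin : Tendsto (fun n => ∑ j ∈ Finset.range J,
      ((j.factorial : ℝ))⁻¹ * ρ ^ j * ‖d n j - e j‖) atTop (nhds 0) := by
    have : ∀ j ∈ Finset.range J, Tendsto (fun n => ((j.factorial : ℝ))⁻¹ * ρ ^ j * ‖d n j - e j‖)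
        atTop (nhds 0) := by
      intro j _
      have h1 : Tendsto (fun n => d n j - e j) atTop (nhds 0) := by
        simpa using (hdconv j).sub_const (e j)
      have h2 : Tendsto (fun n => ‖d n j - e j‖) atTop (nhds 0) := by
        simpa using h1.norm
      simpa using h2.const_mul (((j.factorial : ℝ))⁻¹ * ρ ^ j)
    have := tendsto_finset_sum (Finset.range J) this
    simpa using this
  have hev : ∀ᶠ n in atTop, ∑ j ∈ Finset.range J,
      ((j.factorial : ℝ))⁻¹ * ρ ^ j * ‖d n j - e j‖ < ε / 4 :=
    hfin.eventually (gt_mem_nhds (by positivity : (0:ℝ) < ε / 4))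
  filter_upwards [hev] with n hn z hz
  rw [dist_eq_norm]
  have hS := hsum n z hz
  have key := vm_tail (hS) hq0 hq1 (hterm n z hz) J
  have hfinle : ∑ j ∈ Finset.range J, ‖(j.factorial : ℂ)⁻¹ • z ^ j • (d n j - e j)‖
      ≤ ∑ j ∈ Finset.range J, ((j.factorial : ℝ))⁻¹ * ρ ^ j * ‖d n j - e j‖ := by
    refine Finset.sum_le_sum fun j _ => ?_
    rw [mem_closedBall, dist_zero_right] at hz
    have h1 : ‖(j.factorial : ℂ)‖ = (j.factorial : ℝ) := by
      simp
    rw [norm_smul, norm_smul, norm_inv, norm_pow, h1]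
    have : ‖z‖ ^ j ≤ ρ ^ j := pow_le_pow_left₀ (norm_nonneg z) hz j
    have hj : (0:ℝ) ≤ ((j.factorial : ℝ))⁻¹ := by positivity
    calc ((j.factorial : ℝ))⁻¹ * (‖z‖ ^ j * ‖d n j - e j‖)
        ≤ ((j.factorial : ℝ))⁻¹ * (ρ ^ j * ‖d n j - e j‖) := by
          refine mul_le_mul_of_nonneg_left ?_ hj
          exact mul_le_mul_of_nonneg_right this (norm_nonneg _)
      _ = ((j.factorial : ℝ))⁻¹ * ρ ^ j * ‖d n j - e j‖ := by ring
  have : ‖g z - f n z‖ = ‖f n z - g z‖ := norm_sub_rev _ _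
  rw [this]
  calc ‖f n z - g z‖
      ≤ (∑ j ∈ Finset.range J, ‖(j.factorial : ℂ)⁻¹ • z ^ j • (d n j - e j)‖)
        + 2 * C * q ^ J / (1 - q) := key
    _ ≤ (∑ j ∈ Finset.range J, ((j.factorial : ℝ))⁻¹ * ρ ^ j * ‖d n j - e j‖)
        + 2 * C * q ^ J / (1 - q) := add_le_add_left hfinle _
    _ < ε / 4 + ε / 2 := add_lt_add hn hJ
    _ < ε := by linarith

/-- Vitali–Montel: a uniformly bounded sequence of holomorphic functions on a
disc converging pointwise on the real segment to a holomorphic limit converges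
locally uniformly, together with all its derivatives. -/
theorem vitali_montel_real_segment
    (δ : ℝ) (hδ : 0 < δ) (f : ℕ → ℂ → ℂ) (g : ℂ → ℂ)
    (hf : ∀ n : ℕ, DifferentiableOn ℂ (f n) (ball (0:ℂ) δ))
    (C : ℝ) (hC : 0 < C)
    (hbd : ∀ n : ℕ, ∀ z ∈ ball (0:ℂ) δ, ‖f n z‖ ≤ C)
    (hg : DifferentiableOn ℂ g (ball (0:ℂ) δ))
    (hconv : ∀ x : ℝ, |x| < δ →
      Tendsto (fun n => f n (x : ℂ)) atTop (nhds (g (x : ℂ)))) :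
    ∀ k : ℕ, ∀ K : Set ℂ, K ⊆ ball (0:ℂ) δ → IsCompact K →
      TendstoUniformlyOn (fun n => iteratedDeriv k (f n)) (iteratedDeriv k g)
        atTop K := by
  have main : ∀ k : ℕ, TendstoLocallyUniformlyOn (fun n => iteratedDeriv k (f n))
      (iteratedDeriv k g) atTop (ball (0:ℂ) δ) := by
    intro k
    induction k with
    | zero =>
      simp only [iteratedDeriv_zero]
      rw [tendstoLocallyUniformlyOn_iff_forall_isCompact isOpen_ball]
      intro K hK hKc
      rcases K.eq_empty_or_nonempty with rfl | hne
      · intro u _; simp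
      · obtain ⟨z₀, hz₀K, hmax⟩ := hKc.exists_isMaxOn hne continuous_norm.continuousOn
        have hz₀ : ‖z₀‖ < δ := by
          have := hK hz₀K
          rwa [mem_ball, dist_zero_right] at this
        have := vm_unif_closedBall δ hδ f g hf C hC hbd hg hconv (norm_nonneg z₀) hz₀
        refine this.mono fun z hz => ?_
        rw [mem_closedBall, dist_zero_right]
        exact hmax hz
    | succ k ih =>
      have := ih.deriv (Eventually.of_forall fun n => vm_holo_iteratedDeriv (hf n) k)
        isOpen_ball
      have heq : (deriv ∘ fun n => iteratedDeriv k (f n))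
          = fun n => iteratedDeriv (k + 1) (f n) := by
        funext n; rw [Function.comp_apply, iteratedDeriv_succ]
      rw [heq, ← iteratedDeriv_succ] at this
      exact this
  intro k K hK hKc
  exact (tendstoLocallyUniformlyOn_iff_forall_isCompact isOpen_ball).1 (main k) K hK hKc
end
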